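/- arXiv:2308.09690 — 6 statements merged into one kernel-verified Lean document; each statement's English description precedes it below -/
import Mathlib

section
/- Let (G,σ) be a connected connection graph with a d-dimensional signature. Then σ is consistent if and only if 0 occurs as an eigenvalue of the connection Laplacian L^σ with multiplicity exactly d, i.e. the kernel of L^σ has dimension d. -/
noncomputable section

open Matrix

/-- The simple graph underlying a weight matrix: vertices are adjacent iff the
connecting weight is positive. -/
def graphOf {n : ℕ} (W : Matrix (Fin n) (Fin n) ℝ) : SimpleGraph (Fin n) :=
  SimpleGraph.fromRel (fun i j => 0 < W i j)

/-- `W` is a valid edge-weight matrix: symmetric, zero diagonal, nonnegative entries. -/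
def IsWeight {n : ℕ} (W : Matrix (Fin n) (Fin n) ℝ) : Prop :=
  W.IsSymm ∧ (∀ i, W i i = 0) ∧ (∀ i j, 0 ≤ W i j)

/-- `σ` is a signature on the graph of `W`: it assigns an orthogonal matrix to every
oriented edge, compatibly with the orientation reversal. -/
def IsSignature {n : ℕ} {ι : Type} [Fintype ι] [DecidableEq ι]
    (W : Matrix (Fin n) (Fin n) ℝ) (σ : Fin n → Fin n → Matrix ι ι ℝ) : Prop :=
  (∀ i j, 0 < W i j → (σ i j)ᵀ * σ i j = 1) ∧
  (∀ i j, 0 < W i j → σ j i = (σ i j)ᵀ)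

/-- The connection Laplacian of `(W, σ)`: the `(i,i)` block is `deg(i) • I`, the `(i,j)`
block is `-w_{ij} σ_{ij}`. -/
def connLap {n : ℕ} {ι : Type} [Fintype ι] [DecidableEq ι]
    (W : Matrix (Fin n) (Fin n) ℝ) (σ : Fin n → Fin n → Matrix ι ι ℝ) :
    Matrix (Fin n × ι) (Fin n × ι) ℝ :=
  Matrix.of fun p q =>
    (if p = q then ∑ k, W p.1 k else 0) - W p.1 q.1 * σ p.1 q.1 p.2 q.2

/-- The product of the signature matrices along a list of vertices. -/
def pathSig {n : ℕ} {ι : Type} [Fintype ι] [DecidableEq ι]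
    (σ : Fin n → Fin n → Matrix ι ι ℝ) : List (Fin n) → Matrix ι ι ℝ
  | [] => 1
  | [_] => 1
  | i :: j :: l => σ i j * pathSig σ (j :: l)

/-- `σ` is consistent: the signature product along every directed cycle (closed walk)
of the graph of `W` is the identity. -/
def Consistent {n : ℕ} {ι : Type} [Fintype ι] [DecidableEq ι]
    (W : Matrix (Fin n) (Fin n) ℝ) (σ : Fin n → Fin n → Matrix ι ι ℝ) : Prop :=
  ∀ l : List (Fin n), l.Chain' (fun i j => 0 < W i j) → l.head? = l.getLast? →
    pathSig σ l = 1
section aux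
variable {n d : ℕ} (W : Matrix (Fin n) (Fin n) ℝ) (σ : Fin n → Fin n → Matrix (Fin d) (Fin d) ℝ)

lemma pathSig_append : ∀ (l1 : List (Fin n)) (i : Fin n) (l2 : List (Fin n)),
    pathSig σ (l1 ++ i :: l2) = pathSig σ (l1 ++ [i]) * pathSig σ (i :: l2)
  | [], i, l2 => by simp [pathSig]
  | [a], i, l2 => by simp [pathSig, mul_assoc]
  | a :: b :: t, i, l2 => by
    have := pathSig_append (b :: t) i l2
    simp only [List.cons_append, pathSig, List.append_eq] at this ⊢
    rw [this, mul_assoc]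

lemma pathSig_snoc : ∀ (l : List (Fin n)) (h : l ≠ []) (i : Fin n),
    pathSig σ (l ++ [i]) = pathSig σ l * σ (l.getLast h) i
  | [], h, i => absurd rfl h
  | [a], _, i => by simp [pathSig]
  | a :: b :: t, _, i => by
    have := pathSig_snoc (b :: t) (by simp) i
    simp only [List.cons_append, pathSig, List.append_eq] at this ⊢
    rw [this, mul_assoc]
    congr 2

variable (hσ : IsSignature W σ)
include hσ

lemma pathSig_orth : ∀ (l : List (Fin n)), l.Chain' (fun i j => 0 < W i j) →
    (pathSig σ l)ᵀ * pathSig σ l = 1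
  | [], _ => by simp [pathSig]
  | [a], _ => by simp [pathSig]
  | a :: b :: t, hc => by
    simp only [List.Chain', List.isChain_cons_cons] at hc
    have ih := pathSig_orth (b :: t) hc.2
    simp only [pathSig, transpose_mul]
    calc (pathSig σ (b :: t))ᵀ * (σ a b)ᵀ * (σ a b * pathSig σ (b :: t))
        = (pathSig σ (b :: t))ᵀ * ((σ a b)ᵀ * σ a b) * pathSig σ (b :: t) := by
          simp [mul_assoc]
      _ = 1 := by rw [hσ.1 a b hc.1, mul_one, ih]

lemma pathSig_reverse : ∀ (l : List (Fin n)), l.Chain' (fun i j => 0 < W i j) →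
    pathSig σ l.reverse = (pathSig σ l)ᵀ
  | [], _ => by simp [pathSig]
  | [a], _ => by simp [pathSig]
  | a :: b :: t, hc => by
    simp only [List.Chain', List.isChain_cons_cons] at hc
    have ih := pathSig_reverse (b :: t) hc.2
    have hne : (b :: t).reverse ≠ [] := by simp
    have hlast : ((b :: t).reverse).getLast hne = b := by
      rw [List.getLast_reverse]; rfl
    calc pathSig σ (a :: b :: t).reverse
        = pathSig σ ((b :: t).reverse ++ [a]) := by simp
      _ = pathSig σ (b :: t).reverse * σ (((b :: t).reverse).getLast hne) a :=
          pathSig_snoc σ _ hne a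
      _ = (pathSig σ (b :: t))ᵀ * (σ a b)ᵀ := by rw [ih, hlast, hσ.2 a b hc.1]
      _ = (pathSig σ (a :: b :: t))ᵀ := by simp [pathSig, transpose_mul]

end aux

section ker
variable {n d : ℕ} (W : Matrix (Fin n) (Fin n) ℝ) (σ : Fin n → Fin n → Matrix (Fin d) (Fin d) ℝ)

def Parallel (x : Fin n × Fin d → ℝ) : Prop :=
  ∀ i j, 0 < W i j → ∀ a, x (i, a) = ∑ b, σ i j a b * x (j, b)

lemma connLap_mulVec (x : Fin n × Fin d → ℝ) (p : Fin n × Fin d) :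
    (connLap W σ *ᵥ x) p
      = ∑ j, W p.1 j * (x p - ∑ b, σ p.1 j p.2 b * x (j, b)) := by
  have h1 : (connLap W σ *ᵥ x) p
      = (∑ q : Fin n × Fin d, (if p = q then (∑ k, W p.1 k) else 0) * x q)
        - ∑ q : Fin n × Fin d, W p.1 q.1 * σ p.1 q.1 p.2 q.2 * x q := by
    simp [mulVec, dotProduct, connLap, sub_mul, Finset.sum_sub_distrib]
  have h2 : (∑ q : Fin n × Fin d, (if p = q then (∑ k, W p.1 k) else 0) * x q)
      = (∑ k, W p.1 k) * x p := by
    simp [ite_mul]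
  have h3 : (∑ q : Fin n × Fin d, W p.1 q.1 * σ p.1 q.1 p.2 q.2 * x q)
      = ∑ j, W p.1 j * ∑ b, σ p.1 j p.2 b * x (j, b) := by
    rw [Fintype.sum_prod_type]
    exact Finset.sum_congr rfl fun j _ => by rw [Finset.mul_sum]; exact Finset.sum_congr rfl fun b _ => by ring
  rw [h1, h2, h3]
  rw [Finset.sum_mul, ← Finset.sum_sub_distrib]
  exact Finset.sum_congr rfl fun j _ => by ring

lemma mulVec_eq_zero_of_parallel (hW : IsWeight W) {x : Fin n × Fin d → ℝ}
    (hx : Parallel W σ x) : connLap W σ *ᵥ x = 0 := by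
  funext p
  obtain ⟨i, a⟩ := p
  rw [connLap_mulVec]
  apply Finset.sum_eq_zero
  intro j _
  rcases eq_or_lt_of_le (hW.2.2 i j) with h | h
  · rw [← h, zero_mul]
  · rw [hx i j h a]
    simp

lemma parallel_of_mulVec_eq_zero (hW : IsWeight W) (hσ : IsSignature W σ)
    {x : Fin n × Fin d → ℝ} (hx : connLap W σ *ᵥ x = 0) : Parallel W σ x := by
  have horth : ∀ i j, 0 < W i j →
      ∑ a, (∑ b, σ i j a b * x (j, b))^2 = ∑ b, x (j, b)^2 := by
    intro i j h
    have h0 : (σ i j *ᵥ fun b => x (j, b)) ⬝ᵥ (σ i j *ᵥ fun b => x (j, b))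
        = (fun b => x (j, b)) ⬝ᵥ (fun b => x (j, b)) := by
      rw [dotProduct_mulVec, ← mulVec_transpose, mulVec_mulVec, hσ.1 i j h, one_mulVec]
    simpa [dotProduct, mulVec, sq] using h0
  have key : ∀ i j, W i j * ∑ a, (x (i, a) - ∑ b, σ i j a b * x (j, b))^2
      = W i j * ∑ a, 2 * (x (i, a) * (x (i, a) - ∑ b, σ i j a b * x (j, b)))
        + W i j * ((∑ b, x (j, b)^2) - ∑ a, x (i, a)^2) := by
    intro i j
    rcases eq_or_lt_of_le (hW.2.2 i j) with h | h
    · rw [← h]; ring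
    · have e1 : ∑ a, (x (i, a) - ∑ b, σ i j a b * x (j, b))^2
          = (∑ a, 2 * (x (i, a) * (x (i, a) - ∑ b, σ i j a b * x (j, b))))
            - (∑ a, x (i, a)^2) + ∑ a, (∑ b, σ i j a b * x (j, b))^2 := by
        rw [← Finset.sum_sub_distrib, ← Finset.sum_add_distrib]
        exact Finset.sum_congr rfl fun a _ => by ring
      rw [e1, horth i j h]
      ring
  have hQ : ∑ i, ∑ j, W i j * ((∑ b, x (j, b)^2) - ∑ a, x (i, a)^2) = 0 := by
    have h1 : ∑ i, ∑ j, W i j * ((∑ b, x (j, b)^2) - ∑ a, x (i, a)^2)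
        = - ∑ i, ∑ j, W i j * ((∑ b, x (j, b)^2) - ∑ a, x (i, a)^2) := by
      conv_lhs => rw [Finset.sum_comm]
      rw [← Finset.sum_neg_distrib]
      refine Finset.sum_congr rfl fun i _ => ?_
      rw [← Finset.sum_neg_distrib]
      refine Finset.sum_congr rfl fun j _ => ?_
      rw [hW.1.apply i j]
      ring
    linarith
  have hP : ∑ i, ∑ j, W i j * ∑ a, 2 * (x (i, a) * (x (i, a) - ∑ b, σ i j a b * x (j, b)))
      = 0 := by
    have step : ∀ i : Fin n,
        ∑ j, W i j * ∑ a, 2 * (x (i, a) * (x (i, a) - ∑ b, σ i j a b * x (j, b)))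
          = ∑ a, 2 * (x (i, a) * (connLap W σ *ᵥ x) (i, a)) := by
      intro i
      calc ∑ j, W i j * ∑ a, 2 * (x (i, a) * (x (i, a) - ∑ b, σ i j a b * x (j, b)))
          = ∑ j, ∑ a, 2 * (x (i, a) * (W i j * (x (i, a) - ∑ b, σ i j a b * x (j, b)))) := by
            refine Finset.sum_congr rfl fun j _ => ?_
            rw [Finset.mul_sum]
            exact Finset.sum_congr rfl fun a _ => by ring
        _ = ∑ a, ∑ j, 2 * (x (i, a) * (W i j * (x (i, a) - ∑ b, σ i j a b * x (j, b)))) :=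
            Finset.sum_comm
        _ = ∑ a, 2 * (x (i, a) * (connLap W σ *ᵥ x) (i, a)) := by
            refine Finset.sum_congr rfl fun a _ => ?_
            rw [connLap_mulVec, Finset.mul_sum, Finset.mul_sum]
    simp only [step, hx]
    simp
  have hS : ∑ i, ∑ j, W i j * ∑ a, (x (i, a) - ∑ b, σ i j a b * x (j, b))^2 = 0 := by
    calc ∑ i, ∑ j, W i j * ∑ a, (x (i, a) - ∑ b, σ i j a b * x (j, b))^2
        = (∑ i, ∑ j, W i j * ∑ a, 2 * (x (i, a) * (x (i, a) - ∑ b, σ i j a b * x (j, b))))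
          + ∑ i, ∑ j, W i j * ((∑ b, x (j, b)^2) - ∑ a, x (i, a)^2) := by
          rw [← Finset.sum_add_distrib]
          refine Finset.sum_congr rfl fun i _ => ?_
          rw [← Finset.sum_add_distrib]
          exact Finset.sum_congr rfl fun j _ => key i j
      _ = 0 := by rw [hP, hQ, add_zero]
  -- extract
  intro i j hij a
  have hterm : ∀ i : Fin n, ∀ j : Fin n,
      0 ≤ W i j * ∑ a, (x (i, a) - ∑ b, σ i j a b * x (j, b))^2 := by
    intro i j
    exact mul_nonneg (hW.2.2 i j) (Finset.sum_nonneg fun a _ => sq_nonneg _)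
  have h1 : ∀ i ∈ Finset.univ, ∑ j, W i j * ∑ a, (x (i, a) - ∑ b, σ i j a b * x (j, b))^2 = 0 :=
    (Finset.sum_eq_zero_iff_of_nonneg
      (fun i _ => Finset.sum_nonneg fun j _ => hterm i j)).mp hS
  have h2 : W i j * ∑ a, (x (i, a) - ∑ b, σ i j a b * x (j, b))^2 = 0 := by
    have := h1 i (Finset.mem_univ i)
    rw [Finset.sum_eq_zero_iff_of_nonneg (fun j _ => hterm i j)] at this
    exact this j (Finset.mem_univ j)
  have h3 : ∑ a, (x (i, a) - ∑ b, σ i j a b * x (j, b))^2 = 0 := by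
    rcases mul_eq_zero.mp h2 with h | h
    · exact absurd h (ne_of_gt hij)
    · exact h
  rw [Finset.sum_eq_zero_iff_of_nonneg (fun a _ => sq_nonneg _)] at h3
  have := h3 a (Finset.mem_univ a)
  have := pow_eq_zero_iff (n := 2) (by norm_num) |>.mp this
  linarith [this]

end ker

section main
variable {n d : ℕ} {W : Matrix (Fin n) (Fin n) ℝ}
  {σ : Fin n → Fin n → Matrix (Fin d) (Fin d) ℝ}

lemma hsymm (hW : IsWeight W) : ∀ i j, W j i = W i j := fun i j => hW.1.apply i j

lemma adj_iff (hW : IsWeight W) {i j : Fin n} : (graphOf W).Adj i j ↔ 0 < W i j := by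
  rw [graphOf, SimpleGraph.fromRel_adj]
  constructor
  · rintro ⟨hne, h | h⟩
    · exact h
    · rwa [hW.1.apply] at h
  · intro h
    refine ⟨fun he => ?_, Or.inl h⟩
    rw [he, hW.2.1 j] at h
    exact lt_irrefl 0 h

lemma chain'_support (hW : IsWeight W) {u v : Fin n} (p : (graphOf W).Walk u v) :
    p.support.Chain' (fun i j => 0 < W i j) :=
  (SimpleGraph.Walk.isChain_adj_support p).imp fun _ _ h => (adj_iff hW).mp h

lemma Parallel.sub {x y : Fin n × Fin d → ℝ} (hx : Parallel W σ x) (hy : Parallel W σ y) :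
    Parallel W σ (x - y) := by
  intro i j h a
  simp only [Pi.sub_apply, hx i j h a, hy i j h a, mul_sub, Finset.sum_sub_distrib]

lemma transport : ∀ (l : List (Fin n)) (h : l ≠ []),
    l.Chain' (fun i j => 0 < W i j) →
    ∀ x : Fin n × Fin d → ℝ, Parallel W σ x →
    (fun a => x (l.head h, a)) = pathSig σ l *ᵥ fun a => x (l.getLast h, a)
  | [], h, _, _, _ => absurd rfl h
  | [i], _, _, x, _ => by simp [pathSig]
  | i :: j :: t, _, hc, x, hx => by
    simp only [List.Chain', List.isChain_cons_cons] at hc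
    have ih := transport (j :: t) (by simp) hc.2 x hx
    have hlast : (i :: j :: t).getLast (by simp) = (j :: t).getLast (by simp) :=
      List.getLast_cons (by simp)
    funext a
    show x (i, a) = _
    rw [hx i j hc.1 a]
    calc ∑ b, σ i j a b * x (j, b)
        = (σ i j *ᵥ fun b => x ((j :: t).head (by simp), b)) a := rfl
      _ = (σ i j *ᵥ (pathSig σ (j :: t) *ᵥ fun b => x ((j :: t).getLast (by simp), b))) a := by
          rw [ih]
      _ = (pathSig σ (i :: j :: t) *ᵥ fun b => x ((i :: j :: t).getLast (by simp), b)) a := by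
          rw [mulVec_mulVec, hlast]; rfl

lemma eq_zero_of_parallel (hW : IsWeight W) (hconn : (graphOf W).Connected)
    {x : Fin n × Fin d → ℝ} (hx : Parallel W σ x) (v : Fin n)
    (h0 : ∀ a, x (v, a) = 0) : x = 0 := by
  funext p
  obtain ⟨k, a⟩ := p
  set p0 := (hconn.preconnected k v).some with hp0
  have hne := SimpleGraph.Walk.support_ne_nil p0
  have ht := transport p0.support hne (chain'_support hW p0) x hx
  have hh : p0.support.head hne = k := SimpleGraph.Walk.head_support p0
  have hl : p0.support.getLast hne = v := SimpleGraph.Walk.getLast_support p0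
  have h2 : (fun b => x (p0.support.getLast hne, b)) = 0 := by
    funext b; rw [hl]; exact h0 b
  have := congrFun ht a
  rw [hh, h2, mulVec_zero] at this
  exact this

/-- evaluation at vertex `v` restricted to the kernel -/
def evK (W : Matrix (Fin n) (Fin n) ℝ) (σ : Fin n → Fin n → Matrix (Fin d) (Fin d) ℝ)
    (v : Fin n) : (LinearMap.ker (Matrix.toLin' (connLap W σ))) →ₗ[ℝ] (Fin d → ℝ) :=
  (LinearMap.funLeft ℝ ℝ fun a => (v, a)).comp
    (LinearMap.ker (Matrix.toLin' (connLap W σ))).subtype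

lemma mem_ker_iff (hW : IsWeight W) (hσ : IsSignature W σ) (x : Fin n × Fin d → ℝ) :
    x ∈ LinearMap.ker (Matrix.toLin' (connLap W σ)) ↔ Parallel W σ x := by
  rw [LinearMap.mem_ker, Matrix.toLin'_apply]
  exact ⟨parallel_of_mulVec_eq_zero W σ hW hσ, mulVec_eq_zero_of_parallel W σ hW⟩

lemma evK_injective (hW : IsWeight W) (hσ : IsSignature W σ)
    (hconn : (graphOf W).Connected) (v : Fin n) :
    Function.Injective (evK W σ v) := by
  rw [injective_iff_map_eq_zero]
  intro x hx0
  have hpar := (mem_ker_iff hW hσ x.1).mp x.2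
  have h0 : ∀ a, x.1 (v, a) = 0 := fun a => congrFun hx0 a
  exact Subtype.ext (eq_zero_of_parallel hW hconn hpar v h0)

end main
theorem stmt_0 {n d : ℕ} (hd : 1 ≤ d) (W : Matrix (Fin n) (Fin n) ℝ)
    (hW : IsWeight W) (hconn : (graphOf W).Connected)
    (σ : Fin n → Fin n → Matrix (Fin d) (Fin d) ℝ) (hσ : IsSignature W σ) :
    Consistent W σ ↔
      Module.finrank ℝ (LinearMap.ker (Matrix.toLin' (connLap W σ))) = d := by
  classical
  set K := LinearMap.ker (Matrix.toLin' (connLap W σ)) with hK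
  haveI : Nonempty (Fin n) := hconn.nonempty
  set i0 : Fin n := Classical.arbitrary (Fin n) with hi0
  set L : Fin n → List (Fin n) := fun j => ((hconn.preconnected i0 j).some).support with hL
  have hLne : ∀ j, L j ≠ [] := fun j => SimpleGraph.Walk.support_ne_nil _
  have hLc : ∀ j, (L j).Chain' (fun i j => 0 < W i j) := fun j => chain'_support hW _
  have hLhead : ∀ j, (L j).head (hLne j) = i0 := fun j => SimpleGraph.Walk.head_support _
  have hLlast : ∀ j, (L j).getLast (hLne j) = j := fun j => SimpleGraph.Walk.getLast_support _
  have hLrne : ∀ j, (L j).reverse ≠ [] := fun j => by simpa using hLne j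
  have hLrc : ∀ j, ((L j).reverse).Chain' (fun i j => 0 < W i j) := fun j => by
    simp only [List.Chain', List.isChain_reverse]
    exact (hLc j).imp fun a b h => by
      show 0 < W b a
      rw [hsymm hW]; exact h
  have hLrhead : ∀ j, ((L j).reverse).head (hLrne j) = j := fun j => by
    rw [List.head_reverse, hLlast]
  have hLrlast : ∀ j, ((L j).reverse).getLast (hLrne j) = i0 := fun j => by
    rw [List.getLast_reverse, hLhead]
  set M : Fin n → Matrix (Fin d) (Fin d) ℝ := fun j => pathSig σ (L j).reverse with hM
  constructor
  · -- consistent → finrank = d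
    intro hcons
    have hMi0 : M i0 = 1 := by
      apply hcons _ (hLrc i0)
      rw [List.head?_eq_head (hLrne i0), List.getLast?_eq_getLast_of_ne_nil (hLrne i0),
        hLrhead, hLrlast]
    have factA : ∀ i j, 0 < W i j → M i = σ i j * M j := by
      intro i j hij
      have hWji : 0 < W j i := by rw [hsymm hW]; exact hij
      set c : List (Fin n) := L j ++ (L i).reverse with hc
      have hcc : c.Chain' (fun i j => 0 < W i j) := by
        refine (hLc j).append (hLrc i) ?_
        intro a ha b hb
        rw [List.getLast?_eq_getLast_of_ne_nil (hLne j), hLlast] at ha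
        rw [List.head?_eq_head (hLrne i), hLrhead] at hb
        rw [Option.mem_some_iff] at ha hb
        rw [← ha, ← hb]
        exact hWji
      have hch : c.head? = c.getLast? := by
        rw [hc, List.head?_append_of_ne_nil _ (hLne j),
          List.getLast?_append_of_ne_nil _ (hLrne i),
          List.head?_eq_head (hLne j), List.getLast?_eq_getLast_of_ne_nil (hLrne i),
          hLhead, hLrlast]
      have hsig : pathSig σ c = 1 := hcons c hcc hch
      have hrv : (L i).reverse = i :: ((L i).reverse).tail := by
        conv_lhs => rw [← List.cons_head_tail (hLrne i)]
        rw [hLrhead]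
      have hdecomp : pathSig σ c
          = pathSig σ (L j) * σ j i * pathSig σ ((L i).reverse) := by
        rw [hc]
        conv_lhs => rw [hrv]
        rw [pathSig_append σ (L j) i ((L i).reverse).tail, ← hrv,
          pathSig_snoc σ (L j) (hLne j) i, hLlast]
      have hPA : pathSig σ (L j) * σ j i * pathSig σ ((L i).reverse) = 1 := by
        rw [← hdecomp]; exact hsig
      have hPA' : pathSig σ (L j) * (σ j i * M i) = 1 := by
        rw [hM, ← mul_assoc]; exact hPA
      have hPo : (pathSig σ (L j))ᵀ * pathSig σ (L j) = 1 :=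
        pathSig_orth W σ hσ (L j) (hLc j)
      have hA : σ j i * M i = (pathSig σ (L j))ᵀ := by
        calc σ j i * M i
            = ((pathSig σ (L j))ᵀ * pathSig σ (L j)) * (σ j i * M i) := by
              rw [hPo, one_mul]
          _ = (pathSig σ (L j))ᵀ * (pathSig σ (L j) * (σ j i * M i)) := by
              rw [mul_assoc]
          _ = (pathSig σ (L j))ᵀ := by rw [hPA', mul_one]
      have hMj : M j = (pathSig σ (L j))ᵀ := pathSig_reverse W σ hσ (L j) (hLc j)
      have hid : σ i j * σ j i = 1 := by
        rw [hσ.2 i j hij]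
        exact mul_eq_one_comm.mp (hσ.1 i j hij)
      calc M i = (σ i j * σ j i) * M i := by rw [hid, one_mul]
        _ = σ i j * (σ j i * M i) := by rw [mul_assoc]
        _ = σ i j * M j := by rw [hA, ← hMj]
    have hTpar : ∀ v : Fin d → ℝ, Parallel W σ (fun p => (M p.1 *ᵥ v) p.2) := by
      intro v i j hij a
      show (M i *ᵥ v) a = ∑ b, σ i j a b * (M j *ᵥ v) b
      rw [factA i j hij, ← mulVec_mulVec]
      simp [mulVec, dotProduct]
    set T : (Fin d → ℝ) →ₗ[ℝ] (Fin n × Fin d → ℝ) :=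
      { toFun := fun v => fun p => (M p.1 *ᵥ v) p.2
        map_add' := fun u v => by funext p; simp [mulVec_add]
        map_smul' := fun c v => by funext p; simp [mulVec_smul] } with hT
    have hTK : ∀ v, T v ∈ K := fun v => (mem_ker_iff hW hσ _).mpr (hTpar v)
    set T' : (Fin d → ℝ) →ₗ[ℝ] K := T.codRestrict K hTK with hT'
    set E := evK W σ i0 with hE
    have h1 : E.comp T' = LinearMap.id := by
      apply LinearMap.ext
      intro v
      funext a
      show (M i0 *ᵥ v) a = v a
      rw [hMi0, one_mulVec]
    have h2 : T'.comp E = LinearMap.id := by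
      apply LinearMap.ext
      intro x
      apply Subtype.ext
      show (fun p : Fin n × Fin d => (M p.1 *ᵥ fun a => x.1 (i0, a)) p.2) = x.1
      have hpar := (mem_ker_iff hW hσ x.1).mp x.2
      have hYpar : Parallel W σ (fun p : Fin n × Fin d => (M p.1 *ᵥ fun a => x.1 (i0, a)) p.2) := hTpar _
      have h0 : ∀ a, (x.1 - fun p : Fin n × Fin d => (M p.1 *ᵥ fun a => x.1 (i0, a)) p.2) (i0, a) = 0 := by
        intro a
        simp only [Pi.sub_apply]
        rw [hMi0, one_mulVec]
        exact sub_self _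
      have hz := eq_zero_of_parallel hW hconn (Parallel.sub hpar hYpar) i0 h0
      have := sub_eq_zero.mp hz
      exact this.symm
    have e : (Fin d → ℝ) ≃ₗ[ℝ] K := LinearEquiv.ofLinear T' E h2 h1
    rw [← e.finrank_eq, Module.finrank_fin_fun]
  · -- finrank = d → consistent
    intro hrank l hcl hhl
    rcases l with _ | ⟨i, l'⟩
    · rfl
    rcases l' with _ | ⟨j, t⟩
    · rfl
    have hne : (i :: j :: t : List (Fin n)) ≠ [] := by simp
    have hlast : (i :: j :: t).getLast hne = i := by
      have h2 := List.getLast?_eq_getLast_of_ne_nil hne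
      rw [← hhl] at h2
      exact (Option.some.inj h2).symm
    suffices hfix : ∀ v : Fin d → ℝ, pathSig σ (i :: j :: t) *ᵥ v = v by
      ext a b
      have h3 := congrFun (hfix (Pi.single b 1)) a
      rw [mulVec_single] at h3
      simp only [MulOpposite.op_one, one_smul, Matrix.col_apply] at h3
      rw [h3, Matrix.one_apply, Pi.single_apply]
    intro v
    have hsur : Function.Surjective (evK W σ i) := by
      have hfr : Module.finrank ℝ K = Module.finrank ℝ (Fin d → ℝ) := by
        rw [hrank, Module.finrank_fin_fun]
      exact (LinearMap.injective_iff_surjective_of_finrank_eq_finrank hfr).mp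
        (evK_injective hW hσ hconn i)
    obtain ⟨x, hxv⟩ := hsur v
    have hpar := (mem_ker_iff hW hσ x.1).mp x.2
    have ht := transport (i :: j :: t) hne hcl x.1 hpar
    rw [hlast] at ht
    have hhd : (i :: j :: t).head hne = i := rfl
    rw [hhd] at ht
    have hxfun : (fun a => x.1 (i, a)) = v := hxv
    rw [hxfun] at ht
    exact ht.symm
end
end

section
/- Let σ be an inconsistent d-dimensional signature on a connected graph G, and let ρ be the dimension of the kernel of the connection Laplacian L^σ. Then there exists a (d−ρ)-dimensional signature τ on G such that L^τ is invertible and σ is switching-equivalent to the direct sum (⊕_{i=1}^ρ ι¹) ⊕ τ, where ι¹ denotes the 1-dimensional signature assigning 1 to every oriented edge. -/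
noncomputable section

open Matrix

/-- Switching equivalence of two signatures (possibly presented over different, equipotent,
coordinate index types): there is a vertexwise family of orthogonal matrices intertwining
the two signatures on every oriented edge. -/
def SwitchEquiv {n : ℕ} {ι κ : Type} [Fintype ι] [DecidableEq ι] [Fintype κ] [DecidableEq κ]
    (W : Matrix (Fin n) (Fin n) ℝ)
    (σ : Fin n → Fin n → Matrix ι ι ℝ) (τ : Fin n → Fin n → Matrix κ κ ℝ) : Prop :=
  ∃ f : Fin n → Matrix κ ι ℝ,
    (∀ v, (f v)ᵀ * f v = 1 ∧ f v * (f v)ᵀ = 1) ∧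
    (∀ i j, 0 < W i j → f i * σ i j = τ i j * f j)


namespace StmtAux

variable {n : ℕ} {ι : Type} [Fintype ι] [DecidableEq ι]

lemma dot_mulVec_mulVec (M : Matrix ι ι ℝ) (h : Mᵀ * M = 1) (u v : ι → ℝ) :
    M.mulVec u ⬝ᵥ M.mulVec v = u ⬝ᵥ v := by
  rw [Matrix.dotProduct_mulVec, Matrix.vecMul_mulVec, h, Matrix.vecMul_one]

lemma connLap_mulVec (W : Matrix (Fin n) (Fin n) ℝ) (σ : Fin n → Fin n → Matrix ι ι ℝ)
    (x : Fin n × ι → ℝ) (i : Fin n) (a : ι) :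
    (connLap W σ).mulVec x (i, a)
      = (∑ k, W i k) * x (i, a) - ∑ j, W i j * ∑ b, σ i j a b * x (j, b) := by
  have h : (connLap W σ).mulVec x (i, a)
      = ∑ j, ∑ b, ((if i = j ∧ a = b then ∑ k, W i k else 0) - W i j * σ i j a b) * x (j, b) := by
    simp [Matrix.mulVec, dotProduct, connLap, Fintype.sum_prod_type, Prod.ext_iff]
  rw [h]
  simp only [sub_mul, Finset.sum_sub_distrib, ite_mul, zero_mul]
  congr 1
  · rw [Finset.sum_eq_single i]
    · rw [Finset.sum_eq_single a]
      · simp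
      · intro b _ hb; simp [Ne.symm hb]
      · simp
    · intro j _ hj
      apply Finset.sum_eq_zero; intro b _; simp [Ne.symm hj]
    · simp
  · congr 1; ext j; rw [Finset.mul_sum]; congr 1; ext b; ring

lemma quad (W : Matrix (Fin n) (Fin n) ℝ) (σ : Fin n → Fin n → Matrix ι ι ℝ)
    (hsymm : ∀ i j, W j i = W i j) (hnn : ∀ i j, 0 ≤ W i j)
    (hσ1 : ∀ i j, 0 < W i j → (σ i j)ᵀ * σ i j = 1) (x : Fin n × ι → ℝ) :
    2 * (x ⬝ᵥ (connLap W σ).mulVec x)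
      = ∑ i, ∑ j, W i j * ∑ a, (x (i, a) - ∑ b, σ i j a b * x (j, b)) ^ 2 := by
  have hR : ∀ i j, W i j * ∑ a, (x (i, a) - ∑ b, σ i j a b * x (j, b)) ^ 2
      = W i j * ∑ a, x (i, a) ^ 2 + W i j * ∑ b, x (j, b) ^ 2
        - 2 * (W i j * ∑ a, x (i, a) * ∑ b, σ i j a b * x (j, b)) := by
    intro i j
    rcases (hnn i j).lt_or_eq with h | h
    · have hnorm : ∑ a, (∑ b, σ i j a b * x (j, b)) ^ 2 = ∑ b, x (j, b) ^ 2 := by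
        have := dot_mulVec_mulVec (σ i j) (hσ1 i j h)
          (fun b => x (j, b)) (fun b => x (j, b))
        simpa [Matrix.mulVec, dotProduct, sq] using this
      have expand : ∀ a, (x (i, a) - ∑ b, σ i j a b * x (j, b)) ^ 2
          = x (i, a) ^ 2 + (∑ b, σ i j a b * x (j, b)) ^ 2
            - 2 * (x (i, a) * ∑ b, σ i j a b * x (j, b)) := fun a => by ring
      simp only [expand]
      rw [Finset.sum_sub_distrib, Finset.sum_add_distrib, hnorm, ← Finset.mul_sum]
      ring
    · rw [← h]; ring
  have hRHS : (∑ i, ∑ j, W i j * ∑ a, (x (i, a) - ∑ b, σ i j a b * x (j, b)) ^ 2)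
      = ∑ i, ((∑ j, W i j * ∑ a, x (i, a) ^ 2) + (∑ j, W i j * ∑ b, x (j, b) ^ 2)
          - ∑ j, 2 * (W i j * ∑ a, x (i, a) * ∑ b, σ i j a b * x (j, b))) := by
    refine Finset.sum_congr rfl fun i _ => ?_
    rw [← Finset.sum_add_distrib, ← Finset.sum_sub_distrib]
    exact Finset.sum_congr rfl fun j _ => hR i j
  rw [hRHS]
  have hswap : (∑ i, ∑ j, W i j * ∑ b, x (j, b) ^ 2)
      = ∑ i, ∑ j, W i j * ∑ a, x (i, a) ^ 2 := by
    rw [Finset.sum_comm]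
    exact Finset.sum_congr rfl fun j _ => Finset.sum_congr rfl fun i _ => by rw [hsymm i j]
  rw [Finset.sum_sub_distrib, Finset.sum_add_distrib, hswap]
  have hL : x ⬝ᵥ (connLap W σ).mulVec x
      = (∑ i, ∑ j, W i j * ∑ a, x (i, a) ^ 2)
        - ∑ i, ∑ j, W i j * ∑ a, x (i, a) * ∑ b, σ i j a b * x (j, b) := by
    simp only [dotProduct, Fintype.sum_prod_type]
    rw [← Finset.sum_sub_distrib]
    refine Finset.sum_congr rfl fun i _ => ?_
    calc ∑ a, x (i, a) * (connLap W σ).mulVec x (i, a)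
        = ∑ a, ((∑ k, W i k) * x (i, a) ^ 2
            - ∑ j, x (i, a) * (W i j * ∑ b, σ i j a b * x (j, b))) := by
          refine Finset.sum_congr rfl fun a _ => ?_
          rw [connLap_mulVec, mul_sub, Finset.mul_sum]
          ring_nf
      _ = (∑ j, W i j * ∑ a, x (i, a) ^ 2)
            - ∑ j, W i j * ∑ a, x (i, a) * ∑ b, σ i j a b * x (j, b) := by
          rw [Finset.sum_sub_distrib]
          congr 1
          · rw [← Finset.mul_sum, Finset.sum_mul]
          · rw [Finset.sum_comm]
            refine Finset.sum_congr rfl fun j _ => ?_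
            rw [Finset.mul_sum]
            exact Finset.sum_congr rfl fun a _ => by ring
  rw [hL]
  simp only [← Finset.mul_sum]
  ring

/-- flat sections: values are parallel along all edges. -/
def Flat (W : Matrix (Fin n) (Fin n) ℝ) (σ : Fin n → Fin n → Matrix ι ι ℝ)
    (x : Fin n × ι → ℝ) : Prop :=
  ∀ i j, 0 < W i j → ∀ a, x (i, a) = ∑ b, σ i j a b * x (j, b)

lemma mulVec_eq_zero_of_flat (W : Matrix (Fin n) (Fin n) ℝ)
    (σ : Fin n → Fin n → Matrix ι ι ℝ) (hnn : ∀ i j, 0 ≤ W i j)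
    (x : Fin n × ι → ℝ) (hx : Flat W σ x) :
    (connLap W σ).mulVec x = 0 := by
  funext p
  obtain ⟨i, a⟩ := p
  rw [connLap_mulVec]
  have h : ∀ j, W i j * ∑ b, σ i j a b * x (j, b) = W i j * x (i, a) := by
    intro j
    rcases (hnn i j).lt_or_eq with h | h
    · rw [hx i j h a]
    · rw [← h, zero_mul, zero_mul]
  rw [Finset.sum_congr rfl fun j _ => h j, ← Finset.sum_mul]
  simp

lemma flat_of_mulVec_eq_zero (W : Matrix (Fin n) (Fin n) ℝ)
    (σ : Fin n → Fin n → Matrix ι ι ℝ)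
    (hsymm : ∀ i j, W j i = W i j) (hnn : ∀ i j, 0 ≤ W i j)
    (hσ1 : ∀ i j, 0 < W i j → (σ i j)ᵀ * σ i j = 1) (x : Fin n × ι → ℝ)
    (hx : (connLap W σ).mulVec x = 0) : Flat W σ x := by
  have hq := quad W σ hsymm hnn hσ1 x
  rw [hx] at hq
  simp only [dotProduct_zero, mul_zero] at hq
  intro i j hij a
  have hnn2 : ∀ i ∈ (Finset.univ : Finset (Fin n)), ∀ j ∈ (Finset.univ : Finset (Fin n)),
      0 ≤ W i j * ∑ a, (x (i, a) - ∑ b, σ i j a b * x (j, b)) ^ 2 := by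
    intro i _ j _
    exact mul_nonneg (hnn i j) (Finset.sum_nonneg fun a _ => sq_nonneg _)
  have h0 : W i j * ∑ a, (x (i, a) - ∑ b, σ i j a b * x (j, b)) ^ 2 = 0 := by
    have := (Finset.sum_eq_zero_iff_of_nonneg
      (fun i _ => Finset.sum_nonneg fun j _ =>
        hnn2 i (Finset.mem_univ i) j (Finset.mem_univ j))).mp hq.symm i (Finset.mem_univ i)
    exact (Finset.sum_eq_zero_iff_of_nonneg
      (fun j _ => hnn2 i (Finset.mem_univ i) j (Finset.mem_univ j))).mp this j (Finset.mem_univ j)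
  have hsum0 : ∑ a, (x (i, a) - ∑ b, σ i j a b * x (j, b)) ^ 2 = 0 := by
    rcases mul_eq_zero.mp h0 with h | h
    · exact absurd h hij.ne'
    · exact h
  have h1 := (Finset.sum_eq_zero_iff_of_nonneg fun a _ => sq_nonneg _).mp hsum0 a (Finset.mem_univ a)
  have h2 := (pow_eq_zero_iff two_ne_zero).mp h1
  linarith [h2]

lemma flat_dot_edge (W : Matrix (Fin n) (Fin n) ℝ) (σ : Fin n → Fin n → Matrix ι ι ℝ)
    (hσ1 : ∀ i j, 0 < W i j → (σ i j)ᵀ * σ i j = 1)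
    (x y : Fin n × ι → ℝ) (hx : Flat W σ x) (hy : Flat W σ y)
    {i j : Fin n} (h : 0 < W i j) :
    ∑ a, x (i, a) * y (i, a) = ∑ b, x (j, b) * y (j, b) := by
  have hx' : (fun a => x (i, a)) = (σ i j).mulVec (fun b => x (j, b)) := by
    funext a; exact hx i j h a
  have hy' : (fun a => y (i, a)) = (σ i j).mulVec (fun b => y (j, b)) := by
    funext a; exact hy i j h a
  have hh := dot_mulVec_mulVec (σ i j) (hσ1 i j h) (fun b => x (j, b)) (fun b => y (j, b))
  calc ∑ a, x (i, a) * y (i, a)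
      = (fun a => x (i, a)) ⬝ᵥ (fun a => y (i, a)) := rfl
    _ = (fun b => x (j, b)) ⬝ᵥ (fun b => y (j, b)) := by rw [hx', hy', hh]
    _ = ∑ b, x (j, b) * y (j, b) := rfl

end StmtAux

theorem stmt_4 {n d : ℕ} (hd : 1 ≤ d) (W : Matrix (Fin n) (Fin n) ℝ)
    (hW : IsWeight W) (hconn : (graphOf W).Connected)
    (σ : Fin n → Fin n → Matrix (Fin d) (Fin d) ℝ) (hσ : IsSignature W σ)
    (hinc : ¬ Consistent W σ)
    (ρ : ℕ)
    (hρ : ρ = Module.finrank ℝ (LinearMap.ker (Matrix.toLin' (connLap W σ)))) :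
    ∃ d' : ℕ, ρ + d' = d ∧
      ∃ τ : Fin n → Fin n → Matrix (Fin d') (Fin d') ℝ,
        IsSignature W τ ∧ IsUnit (connLap W τ).det ∧
        SwitchEquiv W σ (fun i j =>
          Matrix.fromBlocks (1 : Matrix (Fin ρ) (Fin ρ) ℝ) 0 0 (τ i j)) := by
  classical
  obtain ⟨hWs, hWd, hWnn⟩ := hW
  obtain ⟨hσ1, hσ2⟩ := hσ
  have hsymm : ∀ i j, W j i = W i j := fun i j => hWs.apply i j
  have hadj : ∀ {u v : Fin n}, (graphOf W).Adj u v → 0 < W u v := by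
    intro u v h
    rw [graphOf, SimpleGraph.fromRel_adj] at h
    rcases h with ⟨-, h | h⟩
    · exact h
    · exact (hsymm u v) ▸ h
  have hconst : ∀ (f : Fin n → ℝ), (∀ u v, 0 < W u v → f u = f v) → ∀ i j, f i = f j := by
    intro f hf i j
    obtain ⟨w⟩ := hconn.preconnected i j
    induction w with
    | nil => rfl
    | cons h p ih => exact (hf _ _ (hadj h)).trans ih
  obtain ⟨v0⟩ := hconn.nonempty
  have hmemK : ∀ x : Fin n × Fin d → ℝ,
      x ∈ LinearMap.ker (Matrix.toLin' (connLap W σ)) ↔ StmtAux.Flat W σ x := by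
    intro x
    rw [LinearMap.mem_ker, Matrix.toLin'_apply]
    constructor
    · exact StmtAux.flat_of_mulVec_eq_zero W σ hsymm hWnn hσ1 x
    · exact StmtAux.mulVec_eq_zero_of_flat W σ hWnn x
  have hdotAll : ∀ (x y : Fin n × Fin d → ℝ), StmtAux.Flat W σ x → StmtAux.Flat W σ y →
      ∀ i, (∑ a, x (i, a) * y (i, a)) = ∑ a, x (v0, a) * y (v0, a) := by
    intro x y hx hy i
    exact hconst (fun i => ∑ a, x (i, a) * y (i, a))
      (fun u v h => StmtAux.flat_dot_edge W σ hσ1 x y hx hy h) i v0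
  -- zero propagation for a general signature on the same weighted graph
  have hflatzero : ∀ {κ : Type} [Fintype κ] [DecidableEq κ]
      (τ : Fin n → Fin n → Matrix κ κ ℝ), (∀ i j, 0 < W i j → (τ i j)ᵀ * τ i j = 1) →
      ∀ (x : Fin n × κ → ℝ), StmtAux.Flat W τ x → (∀ a, x (v0, a) = 0) →
      ∀ p, x p = 0 := by
    intro κ _ _ τ hτ1 x hx h0 p
    obtain ⟨i, a⟩ := p
    have h1 : (∑ c, x (i, c) * x (i, c)) = ∑ c, x (v0, c) * x (v0, c) :=
      hconst (fun i => ∑ c, x (i, c) * x (i, c))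
        (fun u v h => StmtAux.flat_dot_edge W τ hτ1 x x hx hx h) i v0
    have h2 : (∑ c, x (i, c) * x (i, c)) = 0 := by
      rw [h1]; simp [h0]
    have h3 := (Finset.sum_eq_zero_iff_of_nonneg
      fun c _ => mul_self_nonneg _).mp h2 a (Finset.mem_univ a)
    exact mul_self_eq_zero.mp h3
  -- the evaluation of kernel elements at the base vertex
  set K := LinearMap.ker (Matrix.toLin' (connLap W σ)) with hKdef
  let ev : K →ₗ[ℝ] EuclideanSpace ℝ (Fin d) :=
    { toFun := fun x => WithLp.toLp 2 (fun a => (x : Fin n × Fin d → ℝ) (v0, a)),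
      map_add' := fun x y => rfl,
      map_smul' := fun c x => rfl }
  have hev_inj : Function.Injective ev := by
    rw [← LinearMap.ker_eq_bot, eq_bot_iff]
    intro x hx
    have hx0 : ∀ a, (x : Fin n × Fin d → ℝ) (v0, a) = 0 := by
      intro a
      have h := LinearMap.mem_ker.mp hx
      exact congrArg (fun t : EuclideanSpace ℝ (Fin d) => t a) h
    have : ∀ p, (x : Fin n × Fin d → ℝ) p = 0 :=
      hflatzero σ hσ1 (x : Fin n × Fin d → ℝ) ((hmemK _).mp x.2) hx0
    exact Submodule.mem_bot ℝ |>.mpr (Subtype.ext (funext this))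
  have hUrank : Module.finrank ℝ (LinearMap.range ev) = ρ :=
    (LinearMap.finrank_range_of_inj hev_inj).trans hρ.symm
  have hρd : ρ ≤ d := by
    have h1 := Submodule.finrank_le (LinearMap.range ev)
    rw [hUrank, finrank_euclideanSpace] at h1
    simpa using h1
  let g : OrthonormalBasis (Fin ρ) ℝ (LinearMap.range ev) :=
    (stdOrthonormalBasis ℝ (LinearMap.range ev)).reindex (finCongr hUrank)
  have hpre : ∀ a : Fin ρ, ∃ x : K, ev x = (g a : EuclideanSpace ℝ (Fin d)) :=
    fun a => LinearMap.mem_range.mp (g a).2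
  choose e he using hpre
  set E : Fin ρ → Fin n → Fin d → ℝ := fun a i c => (e a : Fin n × Fin d → ℝ) (i, c) with hEdef
  have hflatE : ∀ a, StmtAux.Flat W σ (fun p => E a p.1 p.2) := by
    intro a
    have := (hmemK (e a : Fin n × Fin d → ℝ)).mp (e a).2
    exact this
  have horth : ∀ (i : Fin n) (a b : Fin ρ),
      (∑ c, E a i c * E b i c) = if a = b then 1 else 0 := by
    intro i a b
    have h2 : (inner ℝ (g a) (g b) : ℝ) = ∑ c, E a v0 c * E b v0 c := by
      rw [Submodule.coe_inner, ← he a, ← he b]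
      simp [PiLp.inner_apply, ev]
      exact Finset.sum_congr rfl fun c _ => mul_comm _ _
    have h1 := orthonormal_iff_ite.mp g.orthonormal a b
    have h3 : (∑ a_1, E a i a_1 * E b i a_1) = ∑ c, E a v0 c * E b v0 c :=
      hdotAll _ _ (hflatE a) (hflatE b) i
    rw [h3, ← h2, h1]
  -- extend to orthonormal frames at every vertex
  have hext : ∀ i : Fin n, ∃ b : OrthonormalBasis (Fin d) ℝ (EuclideanSpace ℝ (Fin d)),
      ∀ (c : Fin d) (h : (c : ℕ) < ρ),
        b c = (WithLp.equiv 2 (Fin d → ℝ)).symm (E ⟨c, h⟩ i) := by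
    intro i
    set s : Set (Fin d) := {c | (c : ℕ) < ρ} with hsdef
    set v : Fin d → EuclideanSpace ℝ (Fin d) :=
      fun c => if h : (c : ℕ) < ρ then (WithLp.equiv 2 (Fin d → ℝ)).symm (E ⟨c, h⟩ i) else 0
      with hvdef
    have hv : Orthonormal ℝ (s.restrict v) := by
      rw [orthonormal_iff_ite]
      rintro ⟨c1, h1⟩ ⟨c2, h2⟩
      have h1' : (c1 : ℕ) < ρ := h1
      have h2' : (c2 : ℕ) < ρ := h2
      simp only [Set.restrict_apply, hvdef, dif_pos h1', dif_pos h2']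
      rw [PiLp.inner_apply]
      have := horth i ⟨c1, h1'⟩ ⟨c2, h2'⟩
      simp only [RCLike.inner_apply, conj_trivial]
      show ∑ x, (v c2).ofLp x * (v c1).ofLp x = _
      simp only [hvdef, dif_pos h1', dif_pos h2']
      rw [show (∑ c, ((WithLp.equiv 2 (Fin d → ℝ)).symm (E ⟨c2, h2'⟩ i)).ofLp c *
          ((WithLp.equiv 2 (Fin d → ℝ)).symm (E ⟨c1, h1'⟩ i)).ofLp c)
          = ∑ c, E ⟨c1, h1'⟩ i c * E ⟨c2, h2'⟩ i c from
            Finset.sum_congr rfl fun c _ => mul_comm _ _, this]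
      by_cases hc : c1 = c2
      · subst hc; simp
      · rw [if_neg (by simpa [Fin.ext_iff] using hc), if_neg (by simpa [Subtype.ext_iff, Fin.ext_iff] using hc)]
    have hcard : Module.finrank ℝ (EuclideanSpace ℝ (Fin d)) = Fintype.card (Fin d) := by
      simp [finrank_euclideanSpace]
    obtain ⟨b, hb⟩ := hv.exists_orthonormalBasis_extension_of_card_eq hcard
    refine ⟨b, fun c h => ?_⟩
    rw [hb c h]
    simp only [hvdef, dif_pos h]
  choose bb hbb using hext
  set F : Fin n → Matrix (Fin d) (Fin d) ℝ := fun i => Matrix.of fun r c => bb i r c with hFdef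
  have hFF : ∀ i, F i * (F i)ᵀ = 1 := by
    intro i
    ext r r'
    rw [Matrix.mul_apply, Matrix.one_apply]
    have h1 := orthonormal_iff_ite.mp (bb i).orthonormal r r'
    rw [PiLp.inner_apply] at h1
    simp only [RCLike.inner_apply, conj_trivial] at h1
    simpa [hFdef, Matrix.transpose_apply, mul_comm] using h1
  have hFtF : ∀ i, (F i)ᵀ * F i = 1 := fun i => mul_eq_one_comm.mp (hFF i)
  have hFE : ∀ i (a : Fin ρ) (c : Fin d), F i (Fin.castLE hρd a) c = E a i c := by
    intro i a c
    have h := hbb i (Fin.castLE hρd a) (by simpa using a.2)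
    have : F i (Fin.castLE hρd a) c = bb i (Fin.castLE hρd a) c := rfl
    rw [this, h]
    rfl
  have hWji : ∀ {i j : Fin n}, 0 < W i j → 0 < W j i := by
    intro i j h; rw [hsymm i j]; exact h
  -- expansion of the conjugated signature matrices
  have hexpand : ∀ i j (r c : Fin d),
      (F i * σ i j * (F j)ᵀ) r c = ∑ v, (∑ u, F i r u * σ i j u v) * F j c v := by
    intro i j r c
    simp [Matrix.mul_apply, Matrix.transpose_apply]
  have hM1 : ∀ i j, 0 < W i j → ∀ (a : Fin ρ) (c : Fin d),
      (F i * σ i j * (F j)ᵀ) (Fin.castLE hρd a) c = if c = Fin.castLE hρd a then 1 else 0 := by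
    intro i j hij a c
    rw [hexpand]
    have hstep : ∀ v, (∑ u, F i (Fin.castLE hρd a) u * σ i j u v) = E a j v := by
      intro v
      have hflat := hflatE a j i (hWji hij) v
      calc ∑ u, F i (Fin.castLE hρd a) u * σ i j u v
          = ∑ u, σ j i v u * E a i u := by
            refine Finset.sum_congr rfl fun u _ => ?_
            rw [hFE, hσ2 i j hij, Matrix.transpose_apply]; ring
        _ = E a j v := hflat.symm
    rw [Finset.sum_congr rfl fun v _ => by rw [hstep v]]
    have h2 : (∑ v, E a j v * F j c v) = (F j * (F j)ᵀ) (Fin.castLE hρd a) c := by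
      simp [Matrix.mul_apply, Matrix.transpose_apply, hFE]
    rw [h2, hFF j, Matrix.one_apply]
    simp [eq_comm]
  have hM2 : ∀ i j, 0 < W i j → ∀ (c : Fin d) (a : Fin ρ),
      (F i * σ i j * (F j)ᵀ) c (Fin.castLE hρd a) = if c = Fin.castLE hρd a then 1 else 0 := by
    intro i j hij c a
    rw [hexpand]
    have hstep : (∑ v, (∑ u, F i c u * σ i j u v) * F j (Fin.castLE hρd a) v)
        = ∑ u, F i c u * E a i u := by
      simp only [Finset.sum_mul]
      rw [Finset.sum_comm]
      refine Finset.sum_congr rfl fun u _ => ?_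
      have hflat := hflatE a i j hij u
      calc ∑ v, F i c u * σ i j u v * F j (Fin.castLE hρd a) v
          = F i c u * ∑ v, σ i j u v * E a j v := by
            rw [Finset.mul_sum]
            refine Finset.sum_congr rfl fun v _ => ?_
            rw [hFE]; ring
        _ = F i c u * E a i u := by rw [← hflat]
    rw [hstep]
    have h2 : (∑ u, F i c u * E a i u) = (F i * (F i)ᵀ) c (Fin.castLE hρd a) := by
      simp [Matrix.mul_apply, Matrix.transpose_apply, hFE]
    rw [h2, hFF i, Matrix.one_apply]
  -- the complementary dimension
  refine ⟨d - ρ, by omega, ?_⟩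
  set d' := d - ρ with hd'def
  have hdd : ρ + d' = d := by omega
  let emb : Fin d' → Fin d := fun b => ⟨ρ + (b : ℕ), by omega⟩
  have hembne : ∀ (a : Fin ρ) (b : Fin d'), emb b ≠ Fin.castLE hρd a := by
    intro a b h
    have := congrArg (fun t : Fin d => (t : ℕ)) h
    simp [emb] at this
    omega
  set τ : Fin n → Fin n → Matrix (Fin d') (Fin d') ℝ :=
    fun i j => Matrix.of fun a b => (F i * σ i j * (F j)ᵀ) (emb a) (emb b) with hτdef
  let π : Fin ρ ⊕ Fin d' → Fin d := Sum.elim (Fin.castLE hρd) emb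
  have hπinj : Function.Injective π := by
    rintro (a | a) (b | b) h
    · simp only [π, Sum.elim_inl] at h
      exact congrArg Sum.inl (Fin.castLE_injective hρd h)
    · exact absurd h.symm (hembne a b)
    · exact absurd h (hembne b a)
    · simp only [π, Sum.elim_inr] at h
      have := congrArg (fun t : Fin d => (t : ℕ)) h
      simp [emb] at this
      exact congrArg Sum.inr (Fin.ext this)
  have hπbij : Function.Bijective π :=
    (Fintype.bijective_iff_injective_and_card π).mpr ⟨hπinj, by simp [hdd]⟩
  have hsumπ : ∀ (h : Fin d → ℝ), (∑ u, h u) = ∑ s : Fin ρ ⊕ Fin d', h (π s) :=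
    fun h => (Fintype.sum_bijective π hπbij _ _ fun s => rfl).symm
  have hMorth : ∀ i j, 0 < W i j →
      (F i * σ i j * (F j)ᵀ)ᵀ * (F i * σ i j * (F j)ᵀ) = 1 := by
    intro i j hij
    simp only [Matrix.transpose_mul, Matrix.transpose_transpose, Matrix.mul_assoc]
    rw [← Matrix.mul_assoc ((F i)ᵀ) (F i) (σ i j * (F j)ᵀ), hFtF i, Matrix.one_mul,
      ← Matrix.mul_assoc ((σ i j)ᵀ) (σ i j) ((F j)ᵀ), hσ1 i j hij, Matrix.one_mul]
    exact hFF j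
  have hτ1 : ∀ i j, 0 < W i j → (τ i j)ᵀ * τ i j = 1 := by
    intro i j hij
    ext b b'
    have h1 : ((F i * σ i j * (F j)ᵀ)ᵀ * (F i * σ i j * (F j)ᵀ)) (emb b) (emb b')
        = ∑ u, (F i * σ i j * (F j)ᵀ) u (emb b) * (F i * σ i j * (F j)ᵀ) u (emb b') := by
      rw [Matrix.mul_apply]
      exact Finset.sum_congr rfl fun u _ => by rw [Matrix.transpose_apply]
    rw [hMorth i j hij] at h1
    rw [hsumπ (fun u => (F i * σ i j * (F j)ᵀ) u (emb b)
      * (F i * σ i j * (F j)ᵀ) u (emb b')), Fintype.sum_sum_type] at h1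
    have hz : (∑ a : Fin ρ, (F i * σ i j * (F j)ᵀ) (π (Sum.inl a)) (emb b)
        * (F i * σ i j * (F j)ᵀ) (π (Sum.inl a)) (emb b')) = 0 := by
      apply Finset.sum_eq_zero; intro a _
      rw [show π (Sum.inl a) = Fin.castLE hρd a from rfl, hM1 i j hij a (emb b),
        if_neg (hembne a b)]
      ring
    rw [hz, zero_add] at h1
    have h2 : (∑ a : Fin d', (F i * σ i j * (F j)ᵀ) (π (Sum.inr a)) (emb b)
        * (F i * σ i j * (F j)ᵀ) (π (Sum.inr a)) (emb b'))
        = ((τ i j)ᵀ * τ i j) b b' := by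
      rw [Matrix.mul_apply]
      rfl
    rw [h2] at h1
    rw [← h1, Matrix.one_apply, Matrix.one_apply]
    by_cases hb : b = b'
    · subst hb; simp
    · rw [if_neg (fun h => hb (by
        have := congrArg (fun t : Fin d => (t : ℕ)) h
        simp [emb] at this
        exact Fin.ext this)), if_neg hb]
  have hτ2 : ∀ i j, 0 < W i j → τ j i = (τ i j)ᵀ := by
    intro i j hij
    ext a b
    show (F j * σ j i * (F i)ᵀ) (emb a) (emb b) = (F i * σ i j * (F j)ᵀ) (emb b) (emb a)
    rw [hσ2 i j hij]
    have hh : F j * (σ i j)ᵀ * (F i)ᵀ = (F i * σ i j * (F j)ᵀ)ᵀ := by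
      simp [Matrix.transpose_mul, Matrix.mul_assoc]
    rw [hh, Matrix.transpose_apply]
  refine ⟨τ, ⟨hτ1, hτ2⟩, ?_, ?_⟩
  · -- invertibility
    rw [isUnit_iff_ne_zero]
    intro hdet0
    obtain ⟨x, hx0, hxv⟩ := (Matrix.exists_mulVec_eq_zero_iff).mpr hdet0
    have hxflat : StmtAux.Flat W τ x := StmtAux.flat_of_mulVec_eq_zero W τ hsymm hWnn hτ1 x hxv
    set y : Fin n × Fin d → ℝ := fun p => ∑ b : Fin d', F p.1 (emb b) p.2 * x (p.1, b) with hydef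
    have hyflat : StmtAux.Flat W σ y := by
      intro i j hij c
      have h2 : ∀ b : Fin d', (σ i j * (F j)ᵀ) c (emb b)
          = ∑ a : Fin d', F i (emb a) c * τ i j a b := by
        intro b
        have hA : σ i j * (F j)ᵀ = (F i)ᵀ * (F i * σ i j * (F j)ᵀ) :=
          calc σ i j * (F j)ᵀ = 1 * (σ i j * (F j)ᵀ) := (Matrix.one_mul _).symm
            _ = ((F i)ᵀ * F i) * (σ i j * (F j)ᵀ) := by rw [hFtF i]
            _ = (F i)ᵀ * (F i * σ i j * (F j)ᵀ) := by simp [Matrix.mul_assoc]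
        rw [hA, Matrix.mul_apply,
          hsumπ (fun u => (F i)ᵀ c u * (F i * σ i j * (F j)ᵀ) u (emb b)),
          Fintype.sum_sum_type]
        have hz : (∑ a : Fin ρ, (F i)ᵀ c (π (Sum.inl a))
            * (F i * σ i j * (F j)ᵀ) (π (Sum.inl a)) (emb b)) = 0 := by
          apply Finset.sum_eq_zero; intro a _
          rw [show π (Sum.inl a) = Fin.castLE hρd a from rfl, hM1 i j hij a (emb b),
            if_neg (hembne a b)]
          ring
        rw [hz, zero_add]
        rfl
      have h1 : (∑ v, σ i j c v * y (j, v))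
          = ∑ b : Fin d', x (j, b) * (σ i j * (F j)ᵀ) c (emb b) := by
        simp only [hydef]
        simp only [Finset.mul_sum]
        rw [Finset.sum_comm]
        refine Finset.sum_congr rfl fun b _ => ?_
        rw [Matrix.mul_apply, Finset.mul_sum]
        refine Finset.sum_congr rfl fun v _ => ?_
        rw [Matrix.transpose_apply]; ring
      rw [h1, Finset.sum_congr rfl fun b _ => by rw [h2 b]]
      simp only [Finset.mul_sum]
      rw [Finset.sum_comm]
      refine Eq.symm ?_
      calc ∑ a : Fin d', ∑ b : Fin d', x (j, b) * (F i (emb a) c * τ i j a b)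
          = ∑ a : Fin d', F i (emb a) c * ∑ b : Fin d', τ i j a b * x (j, b) := by
            refine Finset.sum_congr rfl fun a _ => ?_
            rw [Finset.mul_sum]
            exact Finset.sum_congr rfl fun b _ => by ring
        _ = ∑ a : Fin d', F i (emb a) c * x (i, a) := by
            refine Finset.sum_congr rfl fun a _ => ?_
            rw [← hxflat i j hij a]
        _ = y (i, c) := rfl
    have hymemK : y ∈ K := (hmemK y).mpr hyflat
    have hyv0 : ∀ c, y (v0, c) = 0 := by
      have hcoords : ∀ a : Fin ρ,
          g.repr ⟨ev ⟨y, hymemK⟩, LinearMap.mem_range_self _ _⟩ a = 0 := by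
        intro a
        rw [OrthonormalBasis.repr_apply_apply, Submodule.coe_inner]
        have hga : (g a : EuclideanSpace ℝ (Fin d)) = ev (e a) := (he a).symm
        rw [hga]
        rw [PiLp.inner_apply]
        simp only [RCLike.inner_apply, conj_trivial]
        have hterm : ∀ c : Fin d, (ev (e a)) c * (ev ⟨y, hymemK⟩) c
            = ∑ b : Fin d', F v0 (Fin.castLE hρd a) c * (F v0 (emb b) c * x (v0, b)) := by
          intro c
          have h1 : (ev (e a)) c = F v0 (Fin.castLE hρd a) c := (hFE v0 a c).symm
          have h2 : (ev ⟨y, hymemK⟩) c = ∑ b : Fin d', F v0 (emb b) c * x (v0, b) := rfl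
          rw [h1, h2, Finset.mul_sum]
        rw [Finset.sum_congr rfl fun c _ => (mul_comm ((ev ⟨y, hymemK⟩) c) _).trans (hterm c), Finset.sum_comm]
        apply Finset.sum_eq_zero; intro b _
        have h3 : (∑ c, F v0 (Fin.castLE hρd a) c * (F v0 (emb b) c * x (v0, b)))
            = (F v0 * (F v0)ᵀ) (Fin.castLE hρd a) (emb b) * x (v0, b) := by
          rw [Matrix.mul_apply, Finset.sum_mul]
          refine Finset.sum_congr rfl fun c _ => ?_
          rw [Matrix.transpose_apply]; ring
        rw [h3, hFF v0, Matrix.one_apply, if_neg (fun h => hembne a b h.symm)]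
        ring
      have hYu : (⟨ev ⟨y, hymemK⟩, LinearMap.mem_range_self _ _⟩
          : LinearMap.range ev) = 0 := by
        apply g.repr.injective
        ext a
        rw [map_zero]
        simpa using hcoords a
      intro c
      have := congrArg (fun t : LinearMap.range ev => (t : EuclideanSpace ℝ (Fin d)) c) hYu
      exact this
    have hxv0 : ∀ b, x (v0, b) = 0 := by
      intro b
      have hxb : x (v0, b) = ∑ c, F v0 (emb b) c * y (v0, c) := by
        simp only [hydef]
        rw [Finset.sum_congr rfl fun c _ => by
          rw [show (∑ b' : Fin d', F v0 (emb b') c * x (v0, b')) =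
            (∑ b' : Fin d', F v0 (emb b') c * x (v0, b')) from rfl, Finset.mul_sum]]
        rw [Finset.sum_comm]
        refine Eq.symm ?_
        calc ∑ b' : Fin d', ∑ c, F v0 (emb b) c * (F v0 (emb b') c * x (v0, b'))
            = ∑ b' : Fin d', (F v0 * (F v0)ᵀ) (emb b) (emb b') * x (v0, b') := by
              refine Finset.sum_congr rfl fun b' _ => ?_
              rw [Matrix.mul_apply, Finset.sum_mul]
              exact Finset.sum_congr rfl fun c _ => by rw [Matrix.transpose_apply]; ring
          _ = x (v0, b) := by
              rw [Finset.sum_congr rfl fun b' _ => by rw [hFF v0, Matrix.one_apply]]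
              rw [Finset.sum_congr rfl (fun b' _ => by
                rw [show (if emb b = emb b' then (1:ℝ) else 0) = if b = b' then 1 else 0 by
                  by_cases hb : b = b'
                  · subst hb; simp
                  · rw [if_neg (fun h => hb (by
                      have := congrArg (fun t : Fin d => (t : ℕ)) h
                      simp [emb] at this
                      exact Fin.ext this)), if_neg hb]])]
              simp [Finset.sum_ite_eq, ite_mul]
      rw [hxb]
      simp [hyv0]
    exact hx0 (funext (hflatzero τ hτ1 x hxflat hxv0))
  · -- switching equivalence
    refine ⟨fun i => Matrix.of fun (s : Fin ρ ⊕ Fin d') c => F i (π s) c, ?_, ?_⟩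
    · intro i
      constructor
      · ext c c'
        rw [Matrix.mul_apply]
        have h1 : ((F i)ᵀ * F i) c c' = ∑ u, F i u c * F i u c' := by
          rw [Matrix.mul_apply]
          exact Finset.sum_congr rfl fun u _ => by rw [Matrix.transpose_apply]
        rw [show (∑ s : Fin ρ ⊕ Fin d',
            ((Matrix.of fun (s : Fin ρ ⊕ Fin d') c => F i (π s) c))ᵀ c s
            * (Matrix.of fun (s : Fin ρ ⊕ Fin d') c => F i (π s) c) s c')
            = ∑ s : Fin ρ ⊕ Fin d', F i (π s) c * F i (π s) c' from rfl]
        rw [← hsumπ (fun u => F i u c * F i u c'), ← h1, hFtF i]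
      · ext s t
        rw [Matrix.mul_apply]
        have h1 : (∑ c, (Matrix.of fun (s : Fin ρ ⊕ Fin d') c => F i (π s) c) s c
            * ((Matrix.of fun (s : Fin ρ ⊕ Fin d') c => F i (π s) c))ᵀ c t)
            = (F i * (F i)ᵀ) (π s) (π t) := by
          rw [Matrix.mul_apply]
          exact Finset.sum_congr rfl fun c _ => rfl
        rw [h1, hFF i, Matrix.one_apply, Matrix.one_apply]
        by_cases hst : s = t
        · subst hst; simp
        · rw [if_neg (fun h => hst (hπinj h)), if_neg hst]
    · intro i j hij
      ext s c
      rw [Matrix.mul_apply, Matrix.mul_apply]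
      have hL : (∑ u, (Matrix.of fun (s : Fin ρ ⊕ Fin d') c => F i (π s) c) s u * σ i j u c)
          = ((F i * σ i j * (F j)ᵀ) * F j) (π s) c := by
        have hFiσ : (F i * σ i j * (F j)ᵀ) * F j = F i * σ i j := by
          rw [Matrix.mul_assoc (F i * σ i j), hFtF j, Matrix.mul_one]
        rw [hFiσ, Matrix.mul_apply]
        exact Finset.sum_congr rfl fun u _ => rfl
      rw [hL, Matrix.mul_apply,
        hsumπ (fun u => (F i * σ i j * (F j)ᵀ) (π s) u * F j u c)]
      refine Finset.sum_congr rfl fun t _ => ?_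
      have hblock : (F i * σ i j * (F j)ᵀ) (π s) (π t)
          = Matrix.fromBlocks (1 : Matrix (Fin ρ) (Fin ρ) ℝ) 0 0 (τ i j) s t := by
        rcases s with a | a <;> rcases t with b | b
        · rw [show π (Sum.inl a) = Fin.castLE hρd a from rfl,
            show π (Sum.inl b) = Fin.castLE hρd b from rfl,
            hM1 i j hij a (Fin.castLE hρd b), Matrix.fromBlocks_apply₁₁, Matrix.one_apply]
          by_cases hab : a = b
          · subst hab; simp
          · rw [if_neg (fun h => hab (Fin.castLE_injective hρd h).symm), if_neg hab]
        · rw [show π (Sum.inl a) = Fin.castLE hρd a from rfl,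
            show π (Sum.inr b) = emb b from rfl,
            hM1 i j hij a (emb b), if_neg (hembne a b), Matrix.fromBlocks_apply₁₂]
          rfl
        · rw [show π (Sum.inr a) = emb a from rfl,
            show π (Sum.inl b) = Fin.castLE hρd b from rfl,
            hM2 i j hij (emb a) b, if_neg (hembne b a), Matrix.fromBlocks_apply₂₁]
          rfl
        · rw [show π (Sum.inr a) = emb a from rfl,
            show π (Sum.inr b) = emb b from rfl, Matrix.fromBlocks_apply₂₂]
          rfl
      rw [hblock]
      rfl
end
end

section
/- Maximum norm principle: Let (G,σ) be a connection graph, let H⊊V be a nonempty proper subset of vertices, and suppose f:V→ℝ^{d×d} is harmonic on H. Let ‖·‖ be any orthogonally invariant matrix norm on ℝ^{d×d} (a norm satisfying ‖QA‖=‖A‖ for all Q∈O(d) and A∈ℝ^{d×d}). Then max over i in the vertex closure H̄=H∪∂H of ‖f(i)‖ equals max over i in the vertex boundary ∂H of ‖f(i)‖. -/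
noncomputable section

open Matrix

/-- The action of the connection Laplacian on matrix-valued functions on vertices:
`(L f)(i) = Σ_j w_{ij} (f i - σ_{ij} f j)`. -/
def lapApply {n : ℕ} {ι : Type} [Fintype ι] [DecidableEq ι]
    (W : Matrix (Fin n) (Fin n) ℝ) (σ : Fin n → Fin n → Matrix ι ι ℝ)
    (f : Fin n → Matrix ι ι ℝ) (i : Fin n) : Matrix ι ι ℝ :=
  ∑ j, W i j • (f i - σ i j * f j)

/-- The vertex boundary of `H`: vertices outside `H` adjacent to some vertex of `H`. -/
def vertexBoundary {n : ℕ} (W : Matrix (Fin n) (Fin n) ℝ) (H : Set (Fin n)) :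
    Set (Fin n) :=
  {j | j ∉ H ∧ ∃ i ∈ H, (graphOf W).Adj i j}

theorem stmt_7 {n d : ℕ} (hd : 1 ≤ d) (W : Matrix (Fin n) (Fin n) ℝ)
    (hW : IsWeight W) (hconn : (graphOf W).Connected)
    (σ : Fin n → Fin n → Matrix (Fin d) (Fin d) ℝ) (hσ : IsSignature W σ)
    (H : Set (Fin n)) (hne : H.Nonempty) (hproper : H ≠ Set.univ)
    (f : Fin n → Matrix (Fin d) (Fin d) ℝ)
    (hharm : ∀ i ∈ H, lapApply W σ f i = 0)
    (N : Matrix (Fin d) (Fin d) ℝ → ℝ)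
    (hadd : ∀ A B, N (A + B) ≤ N A + N B)
    (hsmul : ∀ (c : ℝ) A, N (c • A) = |c| * N A)
    (hdef : ∀ A, N A = 0 → A = 0)
    (hinv : ∀ Q A : Matrix (Fin d) (Fin d) ℝ, Qᵀ * Q = 1 → N (Q * A) = N A) :
    sSup ((fun i => N (f i)) '' (H ∪ vertexBoundary W H)) =
      sSup ((fun i => N (f i)) '' vertexBoundary W H) := by
  classical
  obtain ⟨hWsymm, hWdiag, hWnn⟩ := hW
  obtain ⟨hσorth, hσsymm⟩ := hσ
  -- basic norm facts
  have hN0 : N 0 = 0 := by simpa using hsmul 0 0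
  have hNnn : ∀ A, 0 ≤ N A := by
    intro A
    have h1 : N ((-1 : ℝ) • A) = N A := by rw [hsmul]; simp
    have h2 := hadd A ((-1 : ℝ) • A)
    have h3 : A + (-1 : ℝ) • A = 0 := by simp
    rw [h3, hN0, h1] at h2
    linarith
  have hNsum : ∀ (s : Finset (Fin n)) (g : Fin n → Matrix (Fin d) (Fin d) ℝ),
      N (∑ j ∈ s, g j) ≤ ∑ j ∈ s, N (g j) := by
    intro s g
    induction s using Finset.induction with
    | empty => simp [hN0]
    | @insert _ _ h ih =>
        rw [Finset.sum_insert h, Finset.sum_insert h]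
        exact le_trans (hadd _ _) (by linarith)
  -- adjacency facts
  have hAdj : ∀ i j : Fin n, 0 < W i j → (graphOf W).Adj i j := by
    intro i j h
    have hij : i ≠ j := by rintro rfl; rw [hWdiag i] at h; exact lt_irrefl 0 h
    exact (SimpleGraph.fromRel_adj _ i j).2 ⟨hij, Or.inl h⟩
  have hAdj' : ∀ i j : Fin n, (graphOf W).Adj i j → 0 < W i j := by
    intro i j h
    rcases (SimpleGraph.fromRel_adj _ i j).1 h with ⟨_, h' | h'⟩
    · exact h'
    · rwa [hWsymm.apply i j] at h'
  obtain ⟨v0, hv0⟩ : ∃ v, v ∉ H := by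
    by_contra hc
    push_neg at hc
    exact hproper (Set.eq_univ_of_forall hc)
  obtain ⟨u0, hu0⟩ := hne
  -- positivity of degrees
  have hdeg : ∀ i : Fin n, 0 < ∑ j, W i j := by
    intro i
    have hiv : ∃ v, v ≠ i := by
      by_cases h : i ∈ H
      · exact ⟨v0, fun hc => hv0 (hc ▸ h)⟩
      · exact ⟨u0, fun hc => h (hc ▸ hu0)⟩
    obtain ⟨v, hv⟩ := hiv
    obtain ⟨p⟩ := hconn.preconnected i v
    have : ∃ j, 0 < W i j := by
      cases p with
      | nil => exact absurd rfl hv.symm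
      | cons h q => exact ⟨_, hAdj' _ _ h⟩
    obtain ⟨j, hj⟩ := this
    have hle : W i j ≤ ∑ k, W i k :=
      Finset.single_le_sum (fun k _ => hWnn i k) (Finset.mem_univ j)
    linarith
  set K : Set (Fin n) := H ∪ vertexBoundary W H with hK
  set S1 : Set ℝ := (fun i => N (f i)) '' K with hS1
  have hS1fin : S1.Finite := (Set.toFinite K).image _
  have hS1ne : S1.Nonempty := ⟨N (f u0), ⟨u0, Or.inl hu0, rfl⟩⟩
  set M : ℝ := sSup S1 with hM
  have hle : ∀ i ∈ K, N (f i) ≤ M := fun i hi =>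
    le_csSup hS1fin.bddAbove ⟨i, hi, rfl⟩
  -- key propagation lemma
  have key : ∀ i ∈ H, N (f i) = M → ∀ j, 0 < W i j → N (f j) = M := by
    intro i hi hMi
    have hharm' : (∑ j, W i j) • f i = ∑ j, W i j • (σ i j * f j) := by
      have h := hharm i hi
      unfold lapApply at h
      have h2 : (∑ j, W i j • f i) - ∑ j, W i j • (σ i j * f j) = 0 := by
        rw [← Finset.sum_sub_distrib]
        simpa [smul_sub] using h
      rw [← Finset.sum_smul] at h2
      exact sub_eq_zero.mp h2
    have hterm : ∀ j, N (W i j • (σ i j * f j)) = W i j * N (f j) := by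
      intro j
      rcases (hWnn i j).eq_or_lt with h | h
      · rw [← h]; simp [hN0]
      · rw [hsmul, abs_of_pos h, hinv _ _ (hσorth i j h)]
    have hmemK : ∀ j, 0 < W i j → j ∈ K := by
      intro j hj
      by_cases hjH : j ∈ H
      · exact Or.inl hjH
      · exact Or.inr ⟨hjH, i, hi, hAdj i j hj⟩
    have hub : ∀ j, W i j * N (f j) ≤ W i j * M := by
      intro j
      rcases (hWnn i j).eq_or_lt with h | h
      · rw [← h]; simp
      · exact mul_le_mul_of_nonneg_left (hle j (hmemK j h)) (le_of_lt h)
    have hchain : (∑ j, W i j) * M ≤ ∑ j, W i j * N (f j) := by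
      calc (∑ j, W i j) * M = N ((∑ j, W i j) • f i) := by
              rw [hsmul, abs_of_pos (hdeg i), hMi]
        _ = N (∑ j, W i j • (σ i j * f j)) := by rw [hharm']
        _ ≤ ∑ j, N (W i j • (σ i j * f j)) := hNsum _ _
        _ = ∑ j, W i j * N (f j) := Finset.sum_congr rfl fun j _ => hterm j
    intro j hj
    by_contra hne'
    have hlt : N (f j) < M := lt_of_le_of_ne (hle j (hmemK j hj)) hne'
    have hstrict : ∑ k, W i k * N (f k) < ∑ k, W i k * M := by
      apply Finset.sum_lt_sum (fun k _ => hub k)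
      exact ⟨j, Finset.mem_univ j, mul_lt_mul_of_pos_left hlt hj⟩
    rw [← Finset.sum_mul] at hstrict
    linarith
  -- walk propagation to the boundary
  have walkprop : ∀ (u v : Fin n) (p : (graphOf W).Walk u v),
      u ∈ H → N (f u) = M → v ∉ H → ∃ b ∈ vertexBoundary W H, N (f b) = M := by
    intro u v p
    induction p with
    | nil => intro hu _ hv; exact absurd hu hv
    | @cons u w v' h q ih =>
        intro hu hMu hv
        have hw : 0 < W u w := hAdj' _ _ h
        have hNw : N (f w) = M := key u hu hMu w hw
        by_cases hwH : w ∈ H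
        · exact ih hwH hNw hv
        · exact ⟨w, ⟨hwH, u, hu, hAdj u w hw⟩, hNw⟩
  -- produce a boundary vertex attaining the max
  have hmax : ∃ b ∈ vertexBoundary W H, N (f b) = M := by
    obtain ⟨x, hx, hxM⟩ := hS1ne.csSup_mem hS1fin
    rcases hx with hxH | hxB
    · obtain ⟨p⟩ := hconn.preconnected x v0
      exact walkprop x v0 p hxH hxM hv0
    · exact ⟨x, hxB, hxM⟩
  obtain ⟨b, hb, hbM⟩ := hmax
  set S2 : Set ℝ := (fun i => N (f i)) '' vertexBoundary W H with hS2
  have hS2fin : S2.Finite := (Set.toFinite _).image _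
  have hS2ne : S2.Nonempty := ⟨N (f b), ⟨b, hb, rfl⟩⟩
  apply le_antisymm
  · exact le_csSup_of_le hS2fin.bddAbove ⟨b, hb, rfl⟩ (le_of_eq hbM.symm)
  · apply csSup_le hS2ne
    rintro x ⟨j, hj, rfl⟩
    exact hle j (Or.inr hj)
end
end

section
/- Let (G,σ) be a connected connection graph and let i≠j∈V. Then Ω_{ij} = −(C_{ii})⁻¹ C_{ij}, where Ω_{ij} = −((L_{j^c,j^c})⁻¹ L_{j^c,j})(i) is the mean path signature and C_{ii}, C_{ij} are the (i,i) and (i,j) d×d blocks of the connection conductance matrix C^σ(i,j). -/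
noncomputable section

open Matrix

/-- The principal block submatrix of the connection Laplacian obtained by deleting the
block row and block column of the vertex `j`. -/
def minorC {n : ℕ} {ι : Type} [Fintype ι] [DecidableEq ι]
    (W : Matrix (Fin n) (Fin n) ℝ) (σ : Fin n → Fin n → Matrix ι ι ℝ) (j : Fin n) :
    Matrix ({k : Fin n // k ≠ j} × ι) ({k : Fin n // k ≠ j} × ι) ℝ :=
  (connLap W σ).submatrix (fun p => ((p.1 : Fin n), p.2)) (fun p => ((p.1 : Fin n), p.2))

/-- The block column `L_{j^c, j}` of the connection Laplacian. -/
def colC {n : ℕ} {ι : Type} [Fintype ι] [DecidableEq ι]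
    (W : Matrix (Fin n) (Fin n) ℝ) (σ : Fin n → Fin n → Matrix ι ι ℝ) (j : Fin n) :
    Matrix ({k : Fin n // k ≠ j} × ι) ι ℝ :=
  (connLap W σ).submatrix (fun p => ((p.1 : Fin n), p.2)) (fun b => (j, b))

/-- The block row `L_{j, j^c}` of the connection Laplacian. -/
def rowC {n : ℕ} {ι : Type} [Fintype ι] [DecidableEq ι]
    (W : Matrix (Fin n) (Fin n) ℝ) (σ : Fin n → Fin n → Matrix ι ι ℝ) (j : Fin n) :
    Matrix ι ({k : Fin n // k ≠ j} × ι) ℝ :=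
  (connLap W σ).submatrix (fun b => (j, b)) (fun p => ((p.1 : Fin n), p.2))

/-- The mean path signature `Ω_{ij} = -((L_{j^c,j^c})⁻¹ L_{j^c,j})(i)` (with `Ω_{jj} = I`). -/
noncomputable def Omega {n : ℕ} {ι : Type} [Fintype ι] [DecidableEq ι]
    (W : Matrix (Fin n) (Fin n) ℝ) (σ : Fin n → Fin n → Matrix ι ι ℝ)
    (i j : Fin n) : Matrix ι ι ℝ :=
  if h : i = j then 1
  else Matrix.of fun a b => (-((minorC W σ j)⁻¹ * colC W σ j)) (⟨i, h⟩, a) b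

/-- The embedding of the pair index `{i,j}` (as `Fin 2`) into the vertex set. -/
def pairEmb {n : ℕ} {ι : Type} (i j : Fin n) : Fin 2 × ι → Fin n × ι :=
  fun p => (if p.1 = 0 then i else j, p.2)

/-- The embedding of the complement `{i,j}^c` into the vertex set. -/
def restEmb {n : ℕ} {ι : Type} (i j : Fin n) :
    {k : Fin n // k ≠ i ∧ k ≠ j} × ι → Fin n × ι :=
  fun p => ((p.1 : Fin n), p.2)

/-- The connection conductance matrix of the pair `(i,j)`: the Schur complement
`L/L_{{i,j}^c,{i,j}^c}` of the connection Laplacian. -/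
noncomputable def conduct {n : ℕ} {ι : Type} [Fintype ι] [DecidableEq ι]
    (W : Matrix (Fin n) (Fin n) ℝ) (σ : Fin n → Fin n → Matrix ι ι ℝ)
    (i j : Fin n) : Matrix (Fin 2 × ι) (Fin 2 × ι) ℝ :=
  (connLap W σ).submatrix (pairEmb i j) (pairEmb i j) -
    (connLap W σ).submatrix (pairEmb i j) (restEmb i j) *
      ((connLap W σ).submatrix (restEmb i j) (restEmb i j))⁻¹ *
      (connLap W σ).submatrix (restEmb i j) (pairEmb i j)

/-- The `(a,b)` block (each of size `d × d`) of a `2d × 2d` matrix. -/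
def blockOf {ι : Type} (C : Matrix (Fin 2 × ι) (Fin 2 × ι) ℝ) (a b : Fin 2) :
    Matrix ι ι ℝ :=
  Matrix.of fun x y => C (a, x) (b, y)

section Aux

variable {n : ℕ} {ι : Type} [Fintype ι] [DecidableEq ι]

/-- Splitting of the vertex-fiber index set along a predicate. -/
def splitEquiv (P : Fin n → Prop) [DecidablePred P] (ι : Type) :
    ({k : Fin n // P k} × ι) ⊕ ({k : Fin n // ¬ P k} × ι) ≃ Fin n × ι where
  toFun := Sum.elim (fun q => ((q.1 : Fin n), q.2)) (fun q => ((q.1 : Fin n), q.2))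
  invFun := fun p => if h : P p.1 then .inl (⟨p.1, h⟩, p.2) else .inr (⟨p.1, h⟩, p.2)
  left_inv := by
    rintro (⟨⟨k, hk⟩, a⟩ | ⟨⟨k, hk⟩, a⟩) <;> simp [hk]
  right_inv := by
    rintro ⟨k, a⟩
    by_cases h : P k <;> simp [h]

@[simp] lemma splitEquiv_inl (P : Fin n → Prop) [DecidablePred P] (ι : Type)
    (q : {k : Fin n // P k} × ι) : splitEquiv P ι (Sum.inl q) = ((q.1 : Fin n), q.2) := rfl

@[simp] lemma splitEquiv_inr (P : Fin n → Prop) [DecidablePred P] (ι : Type)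
    (q : {k : Fin n // ¬ P k} × ι) : splitEquiv P ι (Sum.inr q) = ((q.1 : Fin n), q.2) := rfl

lemma connLap_symm (W : Matrix (Fin n) (Fin n) ℝ) (hW : IsWeight W)
    (σ : Fin n → Fin n → Matrix ι ι ℝ) (hσ : IsSignature W σ)
    (p q : Fin n × ι) : connLap W σ p q = connLap W σ q p := by
  obtain ⟨hWs, hWd, hWnn⟩ := hW
  have hW' : ∀ u v, W v u = W u v := fun u v => hWs.apply u v
  simp only [connLap, Matrix.of_apply]
  have h1 : (if p = q then ∑ k, W p.1 k else 0) = (if q = p then ∑ k, W q.1 k else 0) := by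
    by_cases h : p = q
    · subst h; rfl
    · rw [if_neg h, if_neg (Ne.symm h)]
  rw [h1]
  congr 1
  rcases (hWnn p.1 q.1).eq_or_lt with h0 | hpos
  · rw [← h0, hW' p.1 q.1, ← h0]; ring
  · rw [hW' p.1 q.1, hσ.2 p.1 q.1 hpos, Matrix.transpose_apply]

lemma quad_form_eq (W : Matrix (Fin n) (Fin n) ℝ) (hW : IsWeight W)
    (σ : Fin n → Fin n → Matrix ι ι ℝ) (hσ : IsSignature W σ) (y : Fin n × ι → ℝ) :
    y ⬝ᵥ connLap W σ *ᵥ y =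
      (1/2) * ∑ u, ∑ v, W u v * ∑ a, (y (u,a) - ∑ b, σ u v a b * y (v,b))^2 := by
  obtain ⟨hWs, hWd, hWnn⟩ := hW
  have hW' : ∀ u v, W v u = W u v := fun u v => hWs.apply u v
  have horth : ∀ u v, 0 < W u v →
      ∑ a, (∑ b, σ u v a b * y (v,b))^2 = ∑ b, y (v,b)^2 := by
    intro u v huv
    have h1 := hσ.1 u v huv
    set z : ι → ℝ := fun b => y (v,b) with hz
    have key : (σ u v *ᵥ z) ⬝ᵥ (σ u v *ᵥ z) = z ⬝ᵥ z := by
      calc (σ u v *ᵥ z) ⬝ᵥ (σ u v *ᵥ z)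
          = (z ᵥ* (σ u v)ᵀ) ⬝ᵥ (σ u v *ᵥ z) := by rw [Matrix.vecMul_transpose]
        _ = ((z ᵥ* (σ u v)ᵀ) ᵥ* σ u v) ⬝ᵥ z := by rw [Matrix.dotProduct_mulVec]
        _ = (z ᵥ* ((σ u v)ᵀ * σ u v)) ⬝ᵥ z := by rw [Matrix.vecMul_vecMul]
        _ = z ⬝ᵥ z := by rw [h1, Matrix.vecMul_one]
    have lhs : ∑ a, (∑ b, σ u v a b * y (v,b))^2 = (σ u v *ᵥ z) ⬝ᵥ (σ u v *ᵥ z) := by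
      simp [dotProduct, Matrix.mulVec, pow_two, hz]
    have rhs : z ⬝ᵥ z = ∑ b, y (v,b)^2 := by
      simp [dotProduct, pow_two, hz]
    rw [lhs, key, rhs]
  have hterm : ∀ u v, W u v * ∑ a, (y (u,a) - ∑ b, σ u v a b * y (v,b))^2
      = W u v * (∑ a, y (u,a)^2) + W u v * (∑ b, y (v,b)^2)
        - 2 * (W u v * ∑ a, y (u,a) * ∑ b, σ u v a b * y (v,b)) := by
    intro u v
    rcases (hWnn u v).eq_or_lt with h0 | hpos
    · rw [← h0]; ring
    · have hexp : ∑ a, (y (u,a) - ∑ b, σ u v a b * y (v,b))^2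
          = ((∑ a, y (u,a)^2) + ∑ a, (∑ b, σ u v a b * y (v,b))^2)
            - 2 * (∑ a, y (u,a) * ∑ b, σ u v a b * y (v,b)) := by
        rw [Finset.mul_sum, ← Finset.sum_add_distrib, ← Finset.sum_sub_distrib]
        exact Finset.sum_congr rfl fun a _ => by ring
      rw [hexp, horth u v hpos]; ring
  have inner : ∀ p : Fin n × ι,
      ∑ q : Fin n × ι, ((if p = q then ∑ k, W p.1 k else 0)
          - W p.1 q.1 * σ p.1 q.1 p.2 q.2) * y q
      = (∑ k, W p.1 k) * y p - ∑ q : Fin n × ι, W p.1 q.1 * σ p.1 q.1 p.2 q.2 * y q := by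
    intro p
    simp only [sub_mul]
    rw [Finset.sum_sub_distrib]
    congr 1
    simp [ite_mul]
  have hlhs : y ⬝ᵥ connLap W σ *ᵥ y =
      (∑ p : Fin n × ι, (∑ k, W p.1 k) * y p ^ 2)
        - ∑ p : Fin n × ι, ∑ q : Fin n × ι, y p * (W p.1 q.1 * σ p.1 q.1 p.2 q.2 * y q) := by
    simp only [dotProduct, Matrix.mulVec, connLap, Matrix.of_apply]
    calc ∑ p : Fin n × ι, y p * ∑ q : Fin n × ι, ((if p = q then ∑ k, W p.1 k else 0)
            - W p.1 q.1 * σ p.1 q.1 p.2 q.2) * y q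
        = ∑ p : Fin n × ι, ((∑ k, W p.1 k) * y p ^ 2
            - ∑ q : Fin n × ι, y p * (W p.1 q.1 * σ p.1 q.1 p.2 q.2 * y q)) := by
          refine Finset.sum_congr rfl fun p _ => ?_
          rw [inner p, mul_sub, Finset.mul_sum]
          congr 1
          ring
      _ = _ := Finset.sum_sub_distrib _ _
  have hfirst : ∑ p : Fin n × ι, (∑ k, W p.1 k) * y p ^ 2
      = ∑ u, ∑ v, W u v * ∑ a, y (u,a)^2 := by
    rw [Fintype.sum_prod_type]
    refine Finset.sum_congr rfl fun u _ => ?_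
    have hr : ∑ a : ι, (∑ k, W (u, a).1 k) * y (u, a) ^ 2
        = ∑ a : ι, (∑ k, W u k) * y (u, a) ^ 2 := Finset.sum_congr rfl fun a _ => rfl
    rw [hr, ← Finset.mul_sum, Finset.sum_mul]
  have hsecond : ∑ p : Fin n × ι, ∑ q : Fin n × ι, y p * (W p.1 q.1 * σ p.1 q.1 p.2 q.2 * y q)
      = ∑ u, ∑ v, W u v * ∑ a, y (u,a) * ∑ b, σ u v a b * y (v,b) := by
    rw [Fintype.sum_prod_type]
    refine Finset.sum_congr rfl fun u _ => ?_
    calc ∑ a, ∑ q : Fin n × ι, y (u,a) * (W u q.1 * σ u q.1 a q.2 * y q)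
        = ∑ a, ∑ v, ∑ b, y (u,a) * (W u v * σ u v a b * y (v,b)) :=
          Finset.sum_congr rfl fun a _ => by rw [Fintype.sum_prod_type]
      _ = ∑ v, ∑ a, ∑ b, y (u,a) * (W u v * σ u v a b * y (v,b)) := Finset.sum_comm
      _ = ∑ v, W u v * ∑ a, y (u,a) * ∑ b, σ u v a b * y (v,b) := by
          refine Finset.sum_congr rfl fun v _ => ?_
          rw [Finset.mul_sum]
          refine Finset.sum_congr rfl fun a _ => ?_
          rw [Finset.mul_sum, Finset.mul_sum]
          exact Finset.sum_congr rfl fun b _ => by ring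
  have hswap : ∑ u, ∑ v, W u v * ∑ b, y (v,b)^2 = ∑ u, ∑ v, W u v * ∑ a, y (u,a)^2 := by
    rw [Finset.sum_comm]
    exact Finset.sum_congr rfl fun v _ => Finset.sum_congr rfl fun u _ => by rw [hW' u v]
  have hsum : ∑ u, ∑ v, W u v * ∑ a, (y (u,a) - ∑ b, σ u v a b * y (v,b))^2
      = (∑ u, ∑ v, W u v * ∑ a, y (u,a)^2) + (∑ u, ∑ v, W u v * ∑ b, y (v,b)^2)
        - 2 * ∑ u, ∑ v, W u v * ∑ a, y (u,a) * ∑ b, σ u v a b * y (v,b) := by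
    rw [Finset.mul_sum, ← Finset.sum_add_distrib, ← Finset.sum_sub_distrib]
    refine Finset.sum_congr rfl fun u _ => ?_
    rw [Finset.mul_sum, ← Finset.sum_add_distrib, ← Finset.sum_sub_distrib]
    exact Finset.sum_congr rfl fun v _ => hterm u v
  rw [hlhs, hfirst, hsecond, hsum, hswap]
  ring

lemma ker_prop (W : Matrix (Fin n) (Fin n) ℝ) (hW : IsWeight W)
    (σ : Fin n → Fin n → Matrix ι ι ℝ) (y : Fin n × ι → ℝ)
    (hrel : ∀ u v, 0 < W u v → ∀ a, y (u,a) = ∑ b, σ u v a b * y (v,b))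
    {u v : Fin n} (w : (graphOf W).Walk u v) (hu : ∀ a, y (u,a) = 0) :
    ∀ a, y (v,a) = 0 := by
  induction w with
  | nil => exact hu
  | @cons u x v h _ ih =>
    apply ih
    intro a
    simp only [graphOf, SimpleGraph.fromRel_adj] at h
    have hpos : 0 < W x u := by
      rcases h.2 with h' | h'
      · rw [hW.1.apply u x]; exact h'
      · exact h'
    rw [hrel x u hpos a]
    simp [hu]

lemma minor_posDef (W : Matrix (Fin n) (Fin n) ℝ) (hW : IsWeight W)
    (hconn : (graphOf W).Connected)
    (σ : Fin n → Fin n → Matrix ι ι ℝ) (hσ : IsSignature W σ)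
    (P : Fin n → Prop) [DecidablePred P] {j0 : Fin n} (hj0 : ¬ P j0) :
    ((connLap W σ).submatrix (fun q : {k : Fin n // P k} × ι => ((q.1 : Fin n), q.2))
      (fun q : {k : Fin n // P k} × ι => ((q.1 : Fin n), q.2))).PosDef := by
  rw [Matrix.posDef_iff_dotProduct_mulVec]
  constructor
  · show ((connLap W σ).submatrix _ _)ᴴ = _
    ext p q
    simp only [Matrix.conjTranspose_apply, Matrix.submatrix_apply, star_trivial]
    exact connLap_symm W hW σ hσ _ _
  · intro x hx
    set y : Fin n × ι → ℝ := fun p => if h : P p.1 then x (⟨p.1, h⟩, p.2) else 0 with hy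
    have hy0 : ∀ p : Fin n × ι, ¬ P p.1 → y p = 0 := fun p h => dif_neg h
    have hyemb : ∀ p : {k : Fin n // P k} × ι, y ((p.1 : Fin n), p.2) = x p := by
      rintro ⟨⟨k, hk⟩, a⟩
      simp only [hy, dif_pos hk]
    have hsum : ∀ g : Fin n × ι → ℝ, (∀ p, ¬ P p.1 → g p = 0) →
        ∑ p : Fin n × ι, g p = ∑ p : {k : Fin n // P k} × ι, g ((p.1 : Fin n), p.2) := by
      intro g hg
      rw [← Equiv.sum_comp (splitEquiv P ι) g, Fintype.sum_sum_type]
      have hzero : ∑ q : {k : Fin n // ¬ P k} × ι, g (splitEquiv P ι (Sum.inr q)) = 0 :=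
        Finset.sum_eq_zero fun q _ => by rw [splitEquiv_inr]; exact hg _ q.1.2
      rw [hzero, add_zero]
      exact Finset.sum_congr rfl fun p _ => by rw [splitEquiv_inl]
    have hform : x ⬝ᵥ ((connLap W σ).submatrix
        (fun q : {k : Fin n // P k} × ι => ((q.1 : Fin n), q.2))
        (fun q : {k : Fin n // P k} × ι => ((q.1 : Fin n), q.2))) *ᵥ x
        = y ⬝ᵥ connLap W σ *ᵥ y := by
      simp only [dotProduct, Matrix.mulVec]
      rw [hsum (fun p => y p * ∑ q : Fin n × ι, connLap W σ p q * y q)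
        (fun p h => by simp only [hy0 p h, zero_mul])]
      refine Finset.sum_congr rfl fun p _ => ?_
      rw [hyemb p]
      congr 1
      rw [hsum (fun q => connLap W σ ((p.1 : Fin n), p.2) q * y q)
        (fun q h => by simp only [hy0 q h, mul_zero])]
      exact Finset.sum_congr rfl fun q _ => by rw [hyemb q, Matrix.submatrix_apply]
    have hnonneg : ∀ u v : Fin n, 0 ≤ W u v * ∑ a, (y (u,a) - ∑ b, σ u v a b * y (v,b))^2 :=
      fun u v => mul_nonneg (hW.2.2 u v) (Finset.sum_nonneg fun a _ => sq_nonneg _)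
    have hQ := quad_form_eq W hW σ hσ y
    have hge : (0:ℝ) ≤ y ⬝ᵥ connLap W σ *ᵥ y := by
      rw [hQ]
      have : (0:ℝ) ≤ ∑ u, ∑ v, W u v * ∑ a, (y (u,a) - ∑ b, σ u v a b * y (v,b))^2 :=
        Finset.sum_nonneg fun u _ => Finset.sum_nonneg fun v _ => hnonneg u v
      linarith
    have hne : y ⬝ᵥ connLap W σ *ᵥ y ≠ 0 := by
      intro h0
      have hS : ∑ u, ∑ v, W u v * ∑ a, (y (u,a) - ∑ b, σ u v a b * y (v,b))^2 = 0 := by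
        rw [hQ] at h0; linarith
      have hzero : ∀ u v, 0 < W u v → ∀ a, y (u,a) = ∑ b, σ u v a b * y (v,b) := by
        intro u v huv a
        have huv0 : W u v * ∑ a, (y (u,a) - ∑ b, σ u v a b * y (v,b))^2 = 0 := by
          have h3 := (Finset.sum_eq_zero_iff_of_nonneg
            (fun u _ => Finset.sum_nonneg fun v _ => hnonneg u v)).mp hS u (Finset.mem_univ u)
          exact (Finset.sum_eq_zero_iff_of_nonneg
            (fun v _ => hnonneg u v)).mp h3 v (Finset.mem_univ v)
        have hsq : ∑ a, (y (u,a) - ∑ b, σ u v a b * y (v,b))^2 = 0 := by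
          rcases mul_eq_zero.mp huv0 with h | h
          · exact absurd h huv.ne'
          · exact h
        have h4 := (Finset.sum_eq_zero_iff_of_nonneg
          (fun a _ => sq_nonneg _)).mp hsq a (Finset.mem_univ a)
        have h5 : y (u,a) - ∑ b, σ u v a b * y (v,b) = 0 := by
          exact pow_eq_zero_iff (two_ne_zero) |>.mp h4
        linarith [h5]
      have hyall : ∀ v : Fin n, ∀ a, y (v,a) = 0 := by
        intro v
        obtain ⟨w⟩ := hconn.preconnected j0 v
        exact ker_prop W hW σ y hzero w (fun a => hy0 (j0, a) hj0)
      apply hx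
      funext p
      rw [← hyemb p]
      exact hyall _ _
    have hpos : (0:ℝ) < y ⬝ᵥ connLap W σ *ᵥ y := lt_of_le_of_ne hge (Ne.symm hne)
    show 0 < dotProduct (star x) _
    rwa [star_trivial, hform]

lemma posDef_submatrix_equiv {m l : Type} [Fintype m] [Fintype l] [DecidableEq m] [DecidableEq l]
    {M : Matrix m m ℝ} (hM : M.PosDef) (e : l ≃ m) : (M.submatrix e e).PosDef := by
  rw [Matrix.posDef_iff_dotProduct_mulVec]
  constructor
  · exact hM.1.submatrix e
  · intro x hx
    have hx' : x ∘ e.symm ≠ 0 := by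
      intro h
      apply hx
      funext a
      have := congrFun h (e a)
      simpa using this
    have hp := hM.dotProduct_mulVec_pos hx'
    rw [star_trivial] at hp ⊢
    rwa [Matrix.submatrix_mulVec_equiv, ← comp_equiv_symm_dotProduct]

lemma posDef_schur {m l : Type} [Fintype m] [Fintype l] [DecidableEq m] [DecidableEq l]
    {A : Matrix m m ℝ} {B : Matrix m l ℝ} {D : Matrix l l ℝ}
    (hM : (Matrix.fromBlocks A B Bᴴ D).PosDef) (hD : D.PosDef) :
    (A - B * D⁻¹ * Bᴴ).PosDef := by
  haveI : Invertible D := hD.isUnit.invertible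
  rw [Matrix.posDef_iff_dotProduct_mulVec]
  constructor
  · exact (Matrix.IsHermitian.fromBlocks₂₂ A B hD.1).mp hM.1
  · intro x hx
    set y : l → ℝ := -((D⁻¹ * Bᴴ) *ᵥ x) with hy
    have hz : (Sum.elim x y : m ⊕ l → ℝ) ≠ 0 := by
      intro h0
      apply hx
      funext a
      have := congrFun h0 (Sum.inl a)
      simpa using this
    have hpos := hM.dotProduct_mulVec_pos hz
    rw [Matrix.dotProduct_mulVec] at hpos
    rw [Matrix.schur_complement_eq₂₂ A B x y hD.1] at hpos
    have h0 : (D⁻¹ * Bᴴ) *ᵥ x + y = 0 := by simp [hy]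
    rw [h0] at hpos
    simp only [star_zero, Matrix.zero_vecMul, zero_dotProduct, zero_add] at hpos
    rw [star_trivial] at hpos ⊢
    rwa [Matrix.dotProduct_mulVec]

end Aux

section Main

variable {n : ℕ} {ι : Type} [Fintype ι] [DecidableEq ι]

/-- Splitting of the deleted-`j` index set into the `i` fiber and the rest. -/
def pairSplit (i j : Fin n) (hij : i ≠ j) (ι : Type) :
    (ι ⊕ ({k : Fin n // k ≠ i ∧ k ≠ j} × ι)) ≃ ({k : Fin n // k ≠ j} × ι) where
  toFun := Sum.elim (fun a => (⟨i, hij⟩, a)) (fun q => (⟨q.1.1, q.1.2.2⟩, q.2))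
  invFun := fun p => if h : (p.1 : Fin n) = i then .inl p.2
    else .inr (⟨⟨p.1.1, h, p.1.2⟩, p.2⟩)
  left_inv := by
    rintro (a | ⟨⟨k, hki, hkj⟩, a⟩)
    · simp
    · simp [hki]
  right_inv := by
    rintro ⟨⟨k, hkj⟩, a⟩
    by_cases h : k = i
    · subst h; simp
    · simp [h]

variable (W : Matrix (Fin n) (Fin n) ℝ) (σ : Fin n → Fin n → Matrix ι ι ℝ) (i j : Fin n)

/-- `L_{ii}`. -/
def LiiD : Matrix ι ι ℝ := (connLap W σ).submatrix (fun a : ι => (i, a)) (fun b : ι => (i, b))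

/-- `L_{iR}`. -/
def LiRD : Matrix ι ({k : Fin n // k ≠ i ∧ k ≠ j} × ι) ℝ :=
  (connLap W σ).submatrix (fun a : ι => (i, a)) (restEmb i j)

/-- `L_{Ri}`. -/
def LRiD : Matrix ({k : Fin n // k ≠ i ∧ k ≠ j} × ι) ι ℝ :=
  (connLap W σ).submatrix (restEmb i j) (fun b : ι => (i, b))

/-- `L_{RR}`. -/
def BMD : Matrix ({k : Fin n // k ≠ i ∧ k ≠ j} × ι) ({k : Fin n // k ≠ i ∧ k ≠ j} × ι) ℝ :=
  (connLap W σ).submatrix (restEmb i j) (restEmb i j)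

/-- `L_{ij}`. -/
def LijD : Matrix ι ι ℝ := (connLap W σ).submatrix (fun a : ι => (i, a)) (fun b : ι => (j, b))

/-- `L_{Rj}`. -/
def LRjD : Matrix ({k : Fin n // k ≠ i ∧ k ≠ j} × ι) ι ℝ :=
  (connLap W σ).submatrix (restEmb i j) (fun b : ι => (j, b))

lemma pairEmb_zero (a : ι) : pairEmb i j ((0 : Fin 2), a) = (i, a) := by
  simp [pairEmb]

lemma pairEmb_one (a : ι) : pairEmb i j ((1 : Fin 2), a) = (j, a) := by
  simp [pairEmb, Fin.one_eq_zero_iff]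

lemma blockOf_conduct_00 :
    blockOf (conduct W σ i j) 0 0 = LiiD W σ i - LiRD W σ i j * (BMD W σ i j)⁻¹ * LRiD W σ i j := by
  ext a b
  simp only [blockOf, conduct, Matrix.of_apply, Matrix.sub_apply, Matrix.submatrix_apply,
    LiiD, LiRD, LRiD, BMD, Matrix.mul_apply, pairEmb_zero]

lemma blockOf_conduct_01 :
    blockOf (conduct W σ i j) 0 1 = LijD W σ i j - LiRD W σ i j * (BMD W σ i j)⁻¹ * LRjD W σ i j := by
  ext a b
  simp only [blockOf, conduct, Matrix.of_apply, Matrix.sub_apply, Matrix.submatrix_apply,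
    LijD, LiRD, LRjD, BMD, Matrix.mul_apply, pairEmb_zero, pairEmb_one]

lemma minor_blocks (hij : i ≠ j) :
    (minorC W σ j).submatrix (pairSplit i j hij ι) (pairSplit i j hij ι) =
      Matrix.fromBlocks (LiiD W σ i) (LiRD W σ i j) (LRiD W σ i j) (BMD W σ i j) := by
  ext p q
  rcases p with a | ⟨q1, a⟩ <;> rcases q with b | ⟨q2, b⟩ <;> rfl

lemma colC_rows (hij : i ≠ j) :
    (colC W σ j).submatrix (pairSplit i j hij ι) id =
      Matrix.fromRows (LijD W σ i j) (LRjD W σ i j) := by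
  ext p b
  rcases p with a | ⟨q1, a⟩ <;> rfl

end Main

theorem stmt_12 {n d : ℕ} (hd : 1 ≤ d) (W : Matrix (Fin n) (Fin n) ℝ)
    (hW : IsWeight W) (hconn : (graphOf W).Connected)
    (σ : Fin n → Fin n → Matrix (Fin d) (Fin d) ℝ) (hσ : IsSignature W σ)
    (i j : Fin n) (hij : i ≠ j) :
    Omega W σ i j =
      -((blockOf (conduct W σ i j) 0 0)⁻¹ * blockOf (conduct W σ i j) 0 1) := by
  have hA : (minorC W σ j).PosDef := by
    have h := minor_posDef W hW hconn σ hσ (fun k => k ≠ j) (j0 := j) (by simp)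
    exact h
  have hB : (BMD W σ i j).PosDef := by
    have h := minor_posDef W hW hconn σ hσ (fun k => k ≠ i ∧ k ≠ j) (j0 := j) (by simp)
    exact h
  have hMpd : (Matrix.fromBlocks (LiiD W σ i) (LiRD W σ i j) (LRiD W σ i j)
      (BMD W σ i j)).PosDef := by
    rw [← minor_blocks W σ i j hij]
    exact posDef_submatrix_equiv hA _
  have hLRiH : LRiD W σ i j = (LiRD W σ i j)ᴴ := by
    ext q a
    simp only [LiRD, LRiD, Matrix.conjTranspose_apply, Matrix.submatrix_apply, star_trivial]
    exact connLap_symm W hW σ hσ _ _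
  have hSchur : (LiiD W σ i - LiRD W σ i j * (BMD W σ i j)⁻¹ * LRiD W σ i j).PosDef := by
    rw [hLRiH]
    rw [hLRiH] at hMpd
    exact posDef_schur hMpd hB
  have hdetA : IsUnit (minorC W σ j).det := hA.det_pos.ne'.isUnit
  have hdetB : IsUnit (BMD W σ i j).det := hB.det_pos.ne'.isUnit
  have hdetC : IsUnit (LiiD W σ i - LiRD W σ i j * (BMD W σ i j)⁻¹ * LRiD W σ i j).det :=
    hSchur.det_pos.ne'.isUnit
  set X : Matrix ({k : Fin n // k ≠ j} × Fin d) (Fin d) ℝ :=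
    -((minorC W σ j)⁻¹ * colC W σ j) with hX
  have hAX : minorC W σ j * X = -(colC W σ j) := by
    rw [hX, Matrix.mul_neg, Matrix.mul_nonsing_inv_cancel_left _ _ hdetA]
  set xi : Matrix (Fin d) (Fin d) ℝ :=
    X.submatrix (fun a => ((⟨i, hij⟩ : {k : Fin n // k ≠ j}), a)) id with hxi
  set xR : Matrix ({k : Fin n // k ≠ i ∧ k ≠ j} × Fin d) (Fin d) ℝ :=
    X.submatrix (fun q : {k : Fin n // k ≠ i ∧ k ≠ j} × Fin d =>
      ((⟨q.1.1, q.1.2.2⟩ : {k : Fin n // k ≠ j}), q.2)) id with hxR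
  have hXrows : X.submatrix (pairSplit i j hij (Fin d)) id = Matrix.fromRows xi xR := by
    ext p b
    rcases p with a | q
    · rw [hxi]; rfl
    · rw [hxR]; rfl
  have hXsub : (minorC W σ j * X).submatrix (pairSplit i j hij (Fin d)) (id : Fin d → Fin d)
      = (-(colC W σ j)).submatrix (pairSplit i j hij (Fin d)) id := by rw [hAX]
  rw [← Matrix.submatrix_mul_equiv (minorC W σ j) X _ (pairSplit i j hij (Fin d)) _] at hXsub
  rw [minor_blocks W σ i j hij, hXrows, Matrix.fromBlocks_mul_fromRows] at hXsub
  have hcolneg : (-(colC W σ j)).submatrix (pairSplit i j hij (Fin d)) (id : Fin d → Fin d)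
      = -(Matrix.fromRows (LijD W σ i j) (LRjD W σ i j)) := by
    rw [← colC_rows W σ i j hij]
    ext p b
    simp
  rw [hcolneg] at hXsub
  have h1 : LiiD W σ i * xi + LiRD W σ i j * xR = -(LijD W σ i j) := by
    ext a b
    have h := congrFun (congrFun hXsub (Sum.inl a)) b
    simpa using h
  have h2 : LRiD W σ i j * xi + BMD W σ i j * xR = -(LRjD W σ i j) := by
    ext a b
    have h := congrFun (congrFun hXsub (Sum.inr a)) b
    simpa using h
  have key : (LiiD W σ i - LiRD W σ i j * (BMD W σ i j)⁻¹ * LRiD W σ i j) * xi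
      = -(LijD W σ i j - LiRD W σ i j * (BMD W σ i j)⁻¹ * LRjD W σ i j) := by
    have e0 : LiiD W σ i * xi = -(LijD W σ i j) - LiRD W σ i j * xR := eq_sub_of_add_eq h1
    have e1 : LRiD W σ i j * xi = -(LRjD W σ i j) - BMD W σ i j * xR := eq_sub_of_add_eq h2
    rw [Matrix.sub_mul, Matrix.mul_assoc, Matrix.mul_assoc, e0, e1]
    rw [Matrix.mul_sub ((BMD W σ i j)⁻¹), Matrix.mul_neg,
      Matrix.nonsing_inv_mul_cancel_left _ _ hdetB]
    rw [Matrix.mul_sub (LiRD W σ i j), Matrix.mul_neg]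
    simp only [Matrix.mul_sub, Matrix.sub_mul, Matrix.mul_assoc]
    abel
  have hOmega : Omega W σ i j = xi := by
    rw [Omega, dif_neg hij, hxi, hX]
    rfl
  rw [hOmega, blockOf_conduct_00, blockOf_conduct_01]
  have hxieq : xi = (LiiD W σ i - LiRD W σ i j * (BMD W σ i j)⁻¹ * LRiD W σ i j)⁻¹ *
      ((LiiD W σ i - LiRD W σ i j * (BMD W σ i j)⁻¹ * LRiD W σ i j) * xi) :=
    (Matrix.nonsing_inv_mul_cancel_left _ _ hdetC).symm
  rw [hxieq, key, Matrix.mul_neg]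
end
end

section
/- Conductance matrix under switching equivalence: Let σ≅τ be switching-equivalent d-dimensional signatures on a connected graph G with switching map f:V→O(d). Then for any distinct i,j∈V, F_{ij}·C^σ(i,j) = C^τ(i,j)·F_{ij}, where F_{ij} is the 2d×2d block-diagonal matrix diag(f(i), f(j)). -/
noncomputable section

open Matrix

namespace Stmt13Aux

variable {n d : ℕ}

/-- block diagonal matrix with blocks `g a`. -/
def bd {α : Type} [DecidableEq α] (g : α → Matrix (Fin d) (Fin d) ℝ) :
    Matrix (α × Fin d) (α × Fin d) ℝ :=
  Matrix.of fun p q => if p.1 = q.1 then g p.1 p.2 q.2 else 0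

lemma bd_mul_apply {α : Type} [Fintype α] [DecidableEq α]
    (g : α → Matrix (Fin d) (Fin d) ℝ) (A : Matrix (α × Fin d) (α × Fin d) ℝ)
    (a : α) (x : Fin d) (q : α × Fin d) :
    (bd g * A) (a, x) q = ∑ z, g a x z * A (a, z) q := by
  rw [Matrix.mul_apply, Fintype.sum_prod_type, Finset.sum_eq_single a]
  · simp [bd]
  · intro k _ hk
    simp [bd, Ne.symm hk]
  · simp

lemma mul_bd_apply {α : Type} [Fintype α] [DecidableEq α]
    (g : α → Matrix (Fin d) (Fin d) ℝ) (A : Matrix (α × Fin d) (α × Fin d) ℝ)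
    (p : α × Fin d) (b : α) (y : Fin d) :
    (A * bd g) p (b, y) = ∑ z, A p (b, z) * g b z y := by
  rw [Matrix.mul_apply, Fintype.sum_prod_type, Finset.sum_eq_single b]
  · simp [bd]
  · intro k _ hk
    simp [bd, hk]
  · simp

lemma bd_orth {α : Type} [Fintype α] [DecidableEq α]
    (g : α → Matrix (Fin d) (Fin d) ℝ) (h : ∀ a, (g a)ᵀ * g a = 1) :
    (bd g)ᵀ * (bd g) = 1 := by
  ext ⟨a, x⟩ ⟨b, y⟩
  have : (bd g)ᵀ = bd (fun a => (g a)ᵀ) := by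
    ext ⟨a, x⟩ ⟨b, y⟩
    by_cases hab : a = b <;> simp [bd, hab, eq_comm]
  rw [this, bd_mul_apply]
  by_cases hab : a = b
  · subst hab
    have h2 := congrFun (congrFun (h a) x) y
    simp only [Matrix.mul_apply, transpose_apply] at h2
    simp only [bd, Matrix.of_apply, if_pos rfl, ite_true, if_true, transpose_apply]
    rw [h2]
    simp [Matrix.one_apply, Prod.ext_iff]
  · have : ((1 : Matrix (α × Fin d) (α × Fin d) ℝ)) (a, x) (b, y) = 0 := by
      rw [Matrix.one_apply_ne]
      simp [Prod.ext_iff, hab]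
    rw [this]
    apply Finset.sum_eq_zero
    intro z _
    simp [bd, hab]

/-- the vertex equiv splitting `Fin n` into `{i,j}` and the rest. -/
def vEquiv (i j : Fin n) (hij : i ≠ j) :
    (Fin 2 ⊕ {k : Fin n // k ≠ i ∧ k ≠ j}) ≃ Fin n where
  toFun := Sum.elim (fun a => if a = 0 then i else j) (fun k => (k : Fin n))
  invFun k := if h1 : k = i then Sum.inl 0 else if h2 : k = j then Sum.inl 1 else
    Sum.inr ⟨k, h1, h2⟩
  left_inv s := by
    rcases s with a | ⟨k, h1, h2⟩
    · fin_cases a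
      · simp
      · simp [hij.symm, hij]
    · simp [h1, h2]
  right_inv k := by
    by_cases h1 : k = i
    · simp [h1]
    · by_cases h2 : k = j
      · simp [h1, h2, hij.symm]
      · simp [h1, h2]

def eEquiv (i j : Fin n) (hij : i ≠ j) :
    ((Fin 2 × Fin d) ⊕ ({k : Fin n // k ≠ i ∧ k ≠ j} × Fin d)) ≃ (Fin n × Fin d) :=
  (Equiv.sumProdDistrib _ _ _).symm.trans ((vEquiv i j hij).prodCongr (Equiv.refl (Fin d)))

lemma eEquiv_inl (i j : Fin n) (hij : i ≠ j) (p : Fin 2 × Fin d) :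
    eEquiv i j hij (Sum.inl p) = pairEmb i j p := rfl

lemma eEquiv_inr (i j : Fin n) (hij : i ≠ j) (p : {k : Fin n // k ≠ i ∧ k ≠ j} × Fin d) :
    eEquiv i j hij (Sum.inr p) = restEmb i j p := rfl

lemma mul_split {i j : Fin n} (hij : i ≠ j)
    (A B : Matrix (Fin n × Fin d) (Fin n × Fin d) ℝ)
    {α β : Type} (u : α → Fin n × Fin d) (v : β → Fin n × Fin d) :
    (A * B).submatrix u v =
      A.submatrix u (pairEmb i j) * B.submatrix (pairEmb i j) v +
      A.submatrix u (restEmb i j) * B.submatrix (restEmb i j) v := by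
  ext p q
  simp only [Matrix.submatrix_apply, Matrix.add_apply, Matrix.mul_apply]
  rw [← Equiv.sum_comp (eEquiv i j hij) (fun r => A (u p) r * B r (v q)),
    Fintype.sum_sum_type]
  rfl

lemma intertwine (W : Matrix (Fin n) (Fin n) ℝ) (hW : IsWeight W)
    (σ τ : Fin n → Fin n → Matrix (Fin d) (Fin d) ℝ)
    (f : Fin n → Matrix (Fin d) (Fin d) ℝ)
    (hswitch : ∀ a b, 0 < W a b → f a * σ a b = τ a b * f b) :
    bd f * connLap W σ = connLap W τ * bd f := by
  ext ⟨a, x⟩ ⟨b, y⟩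
  rw [bd_mul_apply, mul_bd_apply]
  simp only [connLap, Matrix.of_apply, mul_sub, sub_mul]
  rw [Finset.sum_sub_distrib, Finset.sum_sub_distrib]
  congr 1
  · by_cases hab : a = b
    · subst hab
      rw [Finset.sum_eq_single y, Finset.sum_eq_single x]
      · simp [mul_comm]
      · intro z _ hz
        simp [Prod.ext_iff, Ne.symm hz]
      · simp
      · intro z _ hz
        simp [Prod.ext_iff, hz]
      · simp
    · have hab' : ∀ z w : Fin d, ((a, z) = (b, w)) = False := by
        intro z w; simp [Prod.ext_iff, hab]
      simp [hab']
  · have e1 : ∑ z, f a x z * (W a b * σ a b z y)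
        = W a b * ∑ z, f a x z * σ a b z y := by
      rw [Finset.mul_sum]
      exact Finset.sum_congr rfl (fun z _ => by ring)
    have e2 : ∑ z, (W a b * τ a b x z) * f b z y
        = W a b * ∑ z, τ a b x z * f b z y := by
      rw [Finset.mul_sum]
      exact Finset.sum_congr rfl (fun z _ => by ring)
    rw [e1, e2]
    rcases (hW.2.2 a b).eq_or_lt with h | h
    · rw [← h]; simp
    · have h2 := congrFun (congrFun (hswitch a b h) x) y
      simp only [Matrix.mul_apply] at h2
      rw [h2]

variable (f : Fin n → Matrix (Fin d) (Fin d) ℝ) (i j : Fin n)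

lemma bd_sub_pp (hij : i ≠ j) :
    (bd f).submatrix (pairEmb i j) (pairEmb i j)
      = bd (fun a : Fin 2 => if a = 0 then f i else f j) := by
  ext ⟨a, x⟩ ⟨b, y⟩
  fin_cases a <;> fin_cases b <;> simp [bd, pairEmb, hij, hij.symm]

lemma bd_sub_rr :
    (bd f).submatrix (restEmb i j) (restEmb i j)
      = bd (fun k : {k : Fin n // k ≠ i ∧ k ≠ j} => f k) := by
  ext ⟨k, x⟩ ⟨l, y⟩
  simp [bd, restEmb, Subtype.coe_inj]

lemma bd_sub_pr :
    (bd f).submatrix (pairEmb i j) (restEmb i j) = (0 : Matrix (Fin 2 × Fin d) _ ℝ) := by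
  ext ⟨a, x⟩ ⟨⟨k, h1, h2⟩, y⟩
  fin_cases a <;> simp [bd, pairEmb, restEmb, Ne.symm h1, Ne.symm h2]

lemma bd_sub_rp :
    (bd f).submatrix (restEmb i j) (pairEmb i j) = (0 : Matrix _ (Fin 2 × Fin d) ℝ) := by
  ext ⟨⟨k, h1, h2⟩, x⟩ ⟨b, y⟩
  fin_cases b <;> simp [bd, pairEmb, restEmb, h1, h2]

end Stmt13Aux

open Stmt13Aux
theorem stmt_13 {n d : ℕ} (hd : 1 ≤ d) (W : Matrix (Fin n) (Fin n) ℝ)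
    (hW : IsWeight W) (hconn : (graphOf W).Connected)
    (σ τ : Fin n → Fin n → Matrix (Fin d) (Fin d) ℝ)
    (hσ : IsSignature W σ) (hτ : IsSignature W τ)
    (f : Fin n → Matrix (Fin d) (Fin d) ℝ)
    (horth : ∀ v, (f v)ᵀ * f v = 1)
    (hswitch : ∀ a b, 0 < W a b → f a * σ a b = τ a b * f b)
    (i j : Fin n) (hij : i ≠ j) :
    (Matrix.of fun p q : Fin 2 × Fin d =>
        if p.1 = q.1 then (if p.1 = 0 then f i else f j) p.2 q.2 else 0) *
      conduct W σ i j =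
    conduct W τ i j *
      (Matrix.of fun p q : Fin 2 × Fin d =>
        if p.1 = q.1 then (if p.1 = 0 then f i else f j) p.2 q.2 else 0) := by
  classical
  set P := pairEmb (ι := Fin d) i j with hP
  set R := restEmb (ι := Fin d) i j with hR
  set Fp := bd (fun a : Fin 2 => if a = 0 then f i else f j) with hFp
  set Fr := bd (fun k : {k : Fin n // k ≠ i ∧ k ≠ j} => f (k : Fin n)) with hFr
  set Lσ := connLap W σ with hLσ
  set Lτ := connLap W τ with hLτ
  have key : bd f * Lσ = Lτ * bd f := intertwine W hW σ τ f hswitch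
  have hsPP := bd_sub_pp f i j hij
  have hsRR := bd_sub_rr f i j
  have hsPR := bd_sub_pr f i j
  have hsRP := bd_sub_rp f i j
  have hPP : Fp * Lσ.submatrix P P = Lτ.submatrix P P * Fp := by
    have h1 : (bd f * Lσ).submatrix P P = (Lτ * bd f).submatrix P P := by rw [key]
    rw [mul_split hij, mul_split hij] at h1
    simpa [hP, hR, hsPP, hsPR, hsRP, hFp] using h1
  have hPR : Fp * Lσ.submatrix P R = Lτ.submatrix P R * Fr := by
    have h1 : (bd f * Lσ).submatrix P R = (Lτ * bd f).submatrix P R := by rw [key]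
    rw [mul_split hij, mul_split hij] at h1
    simpa [hP, hR, hsPP, hsPR, hsRR, hsRP, hFp, hFr] using h1
  have hRP : Fr * Lσ.submatrix R P = Lτ.submatrix R P * Fp := by
    have h1 : (bd f * Lσ).submatrix R P = (Lτ * bd f).submatrix R P := by rw [key]
    rw [mul_split hij, mul_split hij] at h1
    simpa [hP, hR, hsPP, hsPR, hsRR, hsRP, hFp, hFr] using h1
  have hRR : Fr * Lσ.submatrix R R = Lτ.submatrix R R * Fr := by
    have h1 : (bd f * Lσ).submatrix R R = (Lτ * bd f).submatrix R R := by rw [key]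
    rw [mul_split hij, mul_split hij] at h1
    simpa [hP, hR, hsPR, hsRR, hsRP, hFr] using h1
  have hFrL : Frᵀ * Fr = 1 := bd_orth _ (fun k => horth (k : Fin n))
  have hFrR : Fr * Frᵀ = 1 := mul_eq_one_comm.mp hFrL
  have hFrInv : Fr⁻¹ = Frᵀ := Matrix.inv_eq_left_inv hFrL
  have hFrTInv : (Frᵀ)⁻¹ = Fr := Matrix.inv_eq_left_inv hFrR
  have hDτ : Lτ.submatrix R R = Fr * Lσ.submatrix R R * Frᵀ := by
    rw [hRR, Matrix.mul_assoc, hFrR, Matrix.mul_one]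
  have hinvD : (Lτ.submatrix R R)⁻¹ = Fr * (Lσ.submatrix R R)⁻¹ * Frᵀ := by
    rw [hDτ, Matrix.mul_inv_rev, Matrix.mul_inv_rev, hFrTInv, hFrInv]
    rw [Matrix.mul_assoc]
  have hinv : (Lτ.submatrix R R)⁻¹ * Fr = Fr * (Lσ.submatrix R R)⁻¹ := by
    rw [hinvD, Matrix.mul_assoc, Matrix.mul_assoc, hFrL, Matrix.mul_one]
  have hFpEq : (Matrix.of fun p q : Fin 2 × Fin d =>
      if p.1 = q.1 then (if p.1 = 0 then f i else f j) p.2 q.2 else 0) = Fp := rfl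
  rw [hFpEq]
  show Fp * (Lσ.submatrix P P - Lσ.submatrix P R * (Lσ.submatrix R R)⁻¹ * Lσ.submatrix R P)
      = (Lτ.submatrix P P - Lτ.submatrix P R * (Lτ.submatrix R R)⁻¹ * Lτ.submatrix R P) * Fp
  rw [Matrix.mul_sub, Matrix.sub_mul, hPP]
  congr 1
  calc Fp * (Lσ.submatrix P R * (Lσ.submatrix R R)⁻¹ * Lσ.submatrix R P)
      = (Fp * Lσ.submatrix P R) * ((Lσ.submatrix R R)⁻¹ * Lσ.submatrix R P) := by
        rw [Matrix.mul_assoc, Matrix.mul_assoc]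
    _ = Lτ.submatrix P R * (Fr * (Lσ.submatrix R R)⁻¹ * Lσ.submatrix R P) := by
        rw [hPR]; rw [Matrix.mul_assoc, Matrix.mul_assoc]
    _ = Lτ.submatrix P R * ((Lτ.submatrix R R)⁻¹ * (Fr * Lσ.submatrix R P)) := by
        rw [← hinv, Matrix.mul_assoc]
    _ = Lτ.submatrix P R * ((Lτ.submatrix R R)⁻¹ * (Lτ.submatrix R P * Fp)) := by
        rw [hRP]
    _ = Lτ.submatrix P R * (Lτ.submatrix R R)⁻¹ * Lτ.submatrix R P * Fp := by
        rw [Matrix.mul_assoc, Matrix.mul_assoc]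
end
end

section
/- Let (G,σ) be a connected connection graph and let i≠j∈V. Then the diagonal block C_{ii} of the connection conductance matrix C^σ(i,j) is positive definite; in particular, C_{ii} is invertible. -/
noncomputable section

open Matrix

variable {n d : ℕ}

-- expansion of the quadratic form
lemma connLap_form_expand (W : Matrix (Fin n) (Fin n) ℝ)
    (σ : Fin n → Fin n → Matrix (Fin d) (Fin d) ℝ) (v : Fin n × Fin d → ℝ) :
    v ⬝ᵥ (connLap W σ *ᵥ v) =
      (∑ p : Fin n, (∑ k, W p k) * (∑ x, v (p, x) ^ 2)) -
        ∑ p : Fin n, ∑ q : Fin n, ∑ x : Fin d, ∑ y : Fin d,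
          W p q * (σ p q x y * (v (p, x) * v (q, y))) := by
  simp only [dotProduct, mulVec, connLap, Matrix.of_apply, dotProduct, sub_mul, mul_sub,
    Finset.sum_sub_distrib, Finset.mul_sum]
  congr 1
  · rw [Fintype.sum_prod_type]
    refine Finset.sum_congr rfl fun p _ => ?_
    refine Finset.sum_congr rfl fun x _ => ?_
    rw [Finset.sum_eq_single ((p : Fin n), (x : Fin d))]
    · simp [sq]; ring
    · intro q _ hq; simp [Ne.symm hq]
    · simp
  · rw [Fintype.sum_prod_type]
    refine Finset.sum_congr rfl fun p _ => ?_
    rw [Finset.sum_comm, Fintype.sum_prod_type]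
    refine Finset.sum_congr rfl fun q _ => ?_
    rw [Finset.sum_comm]
    refine Finset.sum_congr rfl fun x _ => ?_
    refine Finset.sum_congr rfl fun y _ => ?_
    ring

lemma pair_identity {W : Matrix (Fin n) (Fin n) ℝ}
    {σ : Fin n → Fin n → Matrix (Fin d) (Fin d) ℝ}
    (hW : IsWeight W) (hσ : IsSignature W σ) (v : Fin n × Fin d → ℝ) (p q : Fin n) :
    W p q * (∑ x, (v (p, x) - ∑ y, σ p q x y * v (q, y)) ^ 2)
      = W p q * (∑ x, v (p, x) ^ 2) + W p q * (∑ y, v (q, y) ^ 2)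
        - 2 * ∑ x, ∑ y, W p q * (σ p q x y * (v (p, x) * v (q, y))) := by
  have hC : ∑ x : Fin d, ∑ y : Fin d, W p q * (σ p q x y * (v (p, x) * v (q, y)))
      = W p q * ∑ x : Fin d, ∑ y : Fin d, σ p q x y * (v (p, x) * v (q, y)) := by
    rw [Finset.mul_sum]
    exact Finset.sum_congr rfl fun x _ => by rw [Finset.mul_sum]
  rcases (hW.2.2 p q).eq_or_lt with h | h
  · rw [hC, ← h]; ring
  · have h1 : ∀ x : Fin d, (v (p, x) - ∑ y, σ p q x y * v (q, y)) ^ 2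
        = v (p, x) ^ 2 + (∑ y, σ p q x y * v (q, y)) ^ 2
          - 2 * ∑ y, σ p q x y * (v (p, x) * v (q, y)) := by
      intro x
      have h2 : ∑ y, σ p q x y * (v (p, x) * v (q, y))
          = v (p, x) * ∑ y, σ p q x y * v (q, y) := by
        rw [Finset.mul_sum]; exact Finset.sum_congr rfl fun y _ => by ring
      rw [h2]; ring
    have hexp : ∑ x, (v (p, x) - ∑ y, σ p q x y * v (q, y)) ^ 2
        = (∑ x, v (p, x) ^ 2) + (∑ x, (∑ y, σ p q x y * v (q, y)) ^ 2)
          - 2 * ∑ x, ∑ y, σ p q x y * (v (p, x) * v (q, y)) := by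
      simp only [h1]
      rw [Finset.sum_sub_distrib, Finset.sum_add_distrib, Finset.mul_sum]
    have horth : ∑ x, (∑ y, σ p q x y * v (q, y)) ^ 2 = ∑ y, v (q, y) ^ 2 := by
      have h3 := congrArg (fun M => M *ᵥ (fun y => v (q, y))) (hσ.1 p q h)
      simp only [← Matrix.mulVec_mulVec, Matrix.one_mulVec] at h3
      calc ∑ x, (∑ y, σ p q x y * v (q, y)) ^ 2
          = (σ p q *ᵥ fun y => v (q, y)) ⬝ᵥ (σ p q *ᵥ fun y => v (q, y)) := by
            simp [dotProduct, Matrix.mulVec, sq]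
        _ = (fun y => v (q, y)) ⬝ᵥ (fun y => v (q, y)) := by
            rw [Matrix.dotProduct_mulVec, ← Matrix.mulVec_transpose, h3]
        _ = ∑ y, v (q, y) ^ 2 := by simp [dotProduct, sq]
    rw [hexp, horth, hC]; ring

lemma connLap_form {W : Matrix (Fin n) (Fin n) ℝ}
    {σ : Fin n → Fin n → Matrix (Fin d) (Fin d) ℝ}
    (hW : IsWeight W) (hσ : IsSignature W σ) (v : Fin n × Fin d → ℝ) :
    2 * (v ⬝ᵥ (connLap W σ *ᵥ v))
      = ∑ p, ∑ q, W p q * (∑ x, (v (p, x) - ∑ y, σ p q x y * v (q, y)) ^ 2) := by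
  rw [connLap_form_expand]
  have hdeg : ∀ q : Fin n, ∑ p, W p q = ∑ k, W q k :=
    fun q => Finset.sum_congr rfl fun p _ => by rw [← hW.1.apply]
  calc (2 : ℝ) * ((∑ p : Fin n, (∑ k, W p k) * (∑ x, v (p, x) ^ 2)) -
        ∑ p : Fin n, ∑ q : Fin n, ∑ x : Fin d, ∑ y : Fin d,
          W p q * (σ p q x y * (v (p, x) * v (q, y))))
      = (∑ p : Fin n, (∑ k, W p k) * (∑ x, v (p, x) ^ 2))
        + (∑ q : Fin n, (∑ k, W q k) * (∑ y, v (q, y) ^ 2))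
        - 2 * ∑ p : Fin n, ∑ q : Fin n, ∑ x : Fin d, ∑ y : Fin d,
            W p q * (σ p q x y * (v (p, x) * v (q, y))) := by ring
    _ = ∑ p, ∑ q, W p q * (∑ x, (v (p, x) - ∑ y, σ p q x y * v (q, y)) ^ 2) := by
        simp only [pair_identity hW hσ v]
        simp only [Finset.sum_sub_distrib, Finset.sum_add_distrib]
        congr 1
        · congr 1
          · refine Finset.sum_congr rfl fun p _ => ?_
            rw [← Finset.sum_mul]
          · rw [Finset.sum_comm]
            refine Finset.sum_congr rfl fun q _ => ?_
            rw [← Finset.sum_mul, hdeg]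
        · rw [Finset.mul_sum]
          refine Finset.sum_congr rfl fun p _ => ?_
          rw [Finset.mul_sum]

lemma form_nonneg {W : Matrix (Fin n) (Fin n) ℝ}
    {σ : Fin n → Fin n → Matrix (Fin d) (Fin d) ℝ}
    (hW : IsWeight W) (hσ : IsSignature W σ) (v : Fin n × Fin d → ℝ) :
    0 ≤ v ⬝ᵥ (connLap W σ *ᵥ v) := by
  have h := connLap_form hW hσ v
  have h2 : (0:ℝ) ≤ ∑ p, ∑ q, W p q * (∑ x, (v (p, x) - ∑ y, σ p q x y * v (q, y)) ^ 2) := by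
    refine Finset.sum_nonneg fun p _ => Finset.sum_nonneg fun q _ => ?_
    exact mul_nonneg (hW.2.2 p q) (Finset.sum_nonneg fun x _ => sq_nonneg _)
  linarith

lemma edge_rel {W : Matrix (Fin n) (Fin n) ℝ}
    {σ : Fin n → Fin n → Matrix (Fin d) (Fin d) ℝ}
    (hW : IsWeight W) (hσ : IsSignature W σ) {v : Fin n × Fin d → ℝ}
    (hv : v ⬝ᵥ (connLap W σ *ᵥ v) = 0) :
    ∀ p q, 0 < W p q → ∀ x, v (p, x) = ∑ y, σ p q x y * v (q, y) := by
  have h := connLap_form hW hσ v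
  rw [hv, mul_zero] at h
  have hnn : ∀ p ∈ (Finset.univ : Finset (Fin n)), ∀ q ∈ (Finset.univ : Finset (Fin n)),
      0 ≤ W p q * (∑ x, (v (p, x) - ∑ y, σ p q x y * v (q, y)) ^ 2) := fun p _ q _ =>
    mul_nonneg (hW.2.2 p q) (Finset.sum_nonneg fun x _ => sq_nonneg _)
  intro p q hpq x
  have h1 : W p q * (∑ x, (v (p, x) - ∑ y, σ p q x y * v (q, y)) ^ 2) = 0 := by
    have := (Finset.sum_eq_zero_iff_of_nonneg
      (fun p _ => Finset.sum_nonneg fun q hq => hnn p (Finset.mem_univ p) q hq)).mp h.symm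
      p (Finset.mem_univ p)
    exact (Finset.sum_eq_zero_iff_of_nonneg (fun q hq => hnn p (Finset.mem_univ p) q hq)).mp
      this q (Finset.mem_univ q)
  have h2 : ∑ x, (v (p, x) - ∑ y, σ p q x y * v (q, y)) ^ 2 = 0 := by
    rcases mul_eq_zero.mp h1 with h | h
    · exact absurd h hpq.ne'
    · exact h
  have h3 := (Finset.sum_eq_zero_iff_of_nonneg (fun x _ => sq_nonneg _)).mp h2 x
    (Finset.mem_univ x)
  have := sq_eq_zero_iff.mp h3
  linarith [this]

lemma vanish_propagate {W : Matrix (Fin n) (Fin n) ℝ}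
    {σ : Fin n → Fin n → Matrix (Fin d) (Fin d) ℝ}
    (hW : IsWeight W) (hσ : IsSignature W σ) (hconn : (graphOf W).Connected)
    {v : Fin n × Fin d → ℝ} (hv : v ⬝ᵥ (connLap W σ *ᵥ v) = 0)
    (j : Fin n) (hj : ∀ t, v (j, t) = 0) : v = 0 := by
  have he := edge_rel hW hσ hv
  have step : ∀ a b : Fin n, (graphOf W).Adj a b → (∀ t, v (a, t) = 0) →
      ∀ t, v (b, t) = 0 := by
    intro a b hab ha
    obtain ⟨hne, hpos⟩ := hab
    have hWab : 0 < W a b := by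
      rcases hpos with h | h
      · exact h
      · rwa [← hW.1.apply] at h
    have h0 : σ a b *ᵥ (fun y => v (b, y)) = 0 := by
      funext x
      have := he a b hWab x
      simp only [Matrix.mulVec, dotProduct]
      rw [← this, ha x]; rfl
    have hvb : (fun y => v (b, y)) = 0 := by
      have h4 : ((σ a b)ᵀ * σ a b) *ᵥ (fun y => v (b, y)) = 0 := by
        rw [← Matrix.mulVec_mulVec, h0, Matrix.mulVec_zero]
      rwa [hσ.1 a b hWab, Matrix.one_mulVec] at h4
    exact fun t => congrFun hvb t
  have key : ∀ p : Fin n, ∀ t, v (p, t) = 0 := by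
    intro p
    obtain ⟨w⟩ := hconn.preconnected j p
    clear hv
    induction w with
    | nil => exact hj
    | cons h w ih => exact ih (step _ _ h hj)
  funext q
  exact key q.1 q.2

lemma connLap_symm_apply {W : Matrix (Fin n) (Fin n) ℝ}
    {σ : Fin n → Fin n → Matrix (Fin d) (Fin d) ℝ}
    (hW : IsWeight W) (hσ : IsSignature W σ) (p q : Fin n × Fin d) :
    connLap W σ q p = connLap W σ p q := by
  simp only [connLap, Matrix.of_apply]
  congr 1
  · by_cases h : p = q
    · simp [h]
    · rw [if_neg h, if_neg (Ne.symm h)]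
  · rcases (hW.2.2 p.1 q.1).eq_or_lt with h | h
    · rw [hW.1.apply p.1 q.1, ← h, zero_mul, zero_mul]
    · rw [hW.1.apply p.1 q.1, hσ.2 p.1 q.1 h]
      rfl

lemma dot_submatrix {α : Type} [Fintype α] {β : Type} [Fintype β]
    (M : Matrix β β ℝ) (f : α → β) (hf : Function.Injective f) (v : β → ℝ)
    (hv : ∀ b, (∀ a, f a ≠ b) → v b = 0) :
    (v ∘ f) ⬝ᵥ (M.submatrix f f *ᵥ (v ∘ f)) = v ⬝ᵥ (M *ᵥ v) := by
  classical
  have hsum : ∀ g : β → ℝ, ∑ a, v (f a) * g (f a) = ∑ b, v b * g b := by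
    intro g
    calc ∑ a : α, v (f a) * g (f a)
        = ∑ b ∈ Finset.univ.image f, v b * g b :=
          (Finset.sum_image (f := fun b => v b * g b) (fun a _ b _ h => hf h)).symm
      _ = ∑ b, v b * g b := by
          refine Finset.sum_subset (Finset.subset_univ _) fun b _ hb => ?_
          rw [hv b fun a ha => hb (Finset.mem_image.mpr ⟨a, Finset.mem_univ a, ha⟩), zero_mul]
  have inner : ∀ c : β, ∑ a', M c (f a') * v (f a') = ∑ b', M c b' * v b' := by
    intro c
    calc ∑ a', M c (f a') * v (f a') = ∑ a', v (f a') * M c (f a') := by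
          exact Finset.sum_congr rfl fun _ _ => mul_comm _ _
      _ = ∑ b', v b' * M c b' := hsum _
      _ = ∑ b', M c b' * v b' := Finset.sum_congr rfl fun _ _ => mul_comm _ _
  simp only [dotProduct, Matrix.mulVec, Matrix.submatrix_apply, Function.comp]
  calc ∑ a, v (f a) * ∑ a', M (f a) (f a') * v (f a')
      = ∑ a, v (f a) * ∑ b', M (f a) b' * v b' := by
        exact Finset.sum_congr rfl fun a _ => by rw [inner]
    _ = ∑ b, v b * ∑ b', M b b' * v b' := hsum (fun c => ∑ b', M c b' * v b')

lemma connLap_submatrix_posDef {W : Matrix (Fin n) (Fin n) ℝ}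
    {σ : Fin n → Fin n → Matrix (Fin d) (Fin d) ℝ}
    (hW : IsWeight W) (hσ : IsSignature W σ) (hconn : (graphOf W).Connected)
    {α : Type} [Fintype α] (f : α → Fin n × Fin d) (hf : Function.Injective f)
    (j : Fin n) (hjf : ∀ a, (f a).1 ≠ j) :
    ((connLap W σ).submatrix f f).PosDef := by
  rw [Matrix.posDef_iff_dotProduct_mulVec]
  constructor
  · ext a b
    simp only [Matrix.conjTranspose_apply, Matrix.submatrix_apply, star_trivial]
    exact connLap_symm_apply hW hσ _ _
  · intro u hu
    classical
    set v : Fin n × Fin d → ℝ := fun b => if h : ∃ a, f a = b then u h.choose else 0 with hvdef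
    have hvf : v ∘ f = u := by
      funext a
      have h : ∃ a', f a' = f a := ⟨a, rfl⟩
      simp only [hvdef, Function.comp_apply, dif_pos h]
      rw [hf h.choose_spec]
    have hv0 : ∀ b, (∀ a, f a ≠ b) → v b = 0 := by
      intro b hb
      simp only [hvdef, dif_neg (fun h : ∃ a, f a = b => hb h.choose h.choose_spec)]
    have heq : u ⬝ᵥ ((connLap W σ).submatrix f f *ᵥ u) = v ⬝ᵥ (connLap W σ *ᵥ v) := by
      rw [← hvf]; exact dot_submatrix _ f hf v hv0
    rw [star_trivial, heq]
    rcases (form_nonneg hW hσ v).eq_or_lt with h | h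
    · exfalso
      have hvz := vanish_propagate hW hσ hconn h.symm j
        (fun t => hv0 (j, t) (fun a ha => hjf a (by rw [ha])))
      apply hu
      rw [← hvf, hvz]
      rfl
    · exact h

lemma schur_posDef {m m' : Type} [Fintype m] [Fintype m'] [DecidableEq m']
    (A : Matrix m m ℝ) (B : Matrix m m' ℝ) {D : Matrix m' m' ℝ}
    (hD : D.PosDef) (hM : (Matrix.fromBlocks A B Bᴴ D).PosDef) :
    (A - B * D⁻¹ * Bᴴ).PosDef := by
  haveI := hD.isUnit.invertible
  rw [Matrix.posDef_iff_dotProduct_mulVec]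
  constructor
  · exact (Matrix.IsHermitian.fromBlocks₂₂ A B hD.1).mp hM.1
  · intro x hx
    set y : m' → ℝ := -((D⁻¹ * Bᴴ) *ᵥ x) with hy
    have hz : (Sum.elim x y : m ⊕ m' → ℝ) ≠ 0 := by
      intro h
      exact hx (funext fun t => congrFun h (Sum.inl t))
    have hpos := hM.dotProduct_mulVec_pos hz
    have key := Matrix.schur_complement_eq₂₂ A B x y hD.1
    have hzero : (D⁻¹ * Bᴴ) *ᵥ x + y = 0 := by rw [hy]; exact add_neg_cancel _
    rw [hzero] at key
    simp only [star_trivial] at key hpos ⊢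
    rw [Matrix.dotProduct_mulVec] at hpos ⊢
    rw [key] at hpos
    simpa using hpos

theorem stmt_15 {n d : ℕ} (hd : 1 ≤ d) (W : Matrix (Fin n) (Fin n) ℝ)
    (hW : IsWeight W) (hconn : (graphOf W).Connected)
    (σ : Fin n → Fin n → Matrix (Fin d) (Fin d) ℝ) (hσ : IsSignature W σ)
    (i j : Fin n) (hij : i ≠ j) :
    (blockOf (conduct W σ i j) 0 0).PosDef := by
  set L := connLap W σ with hL
  set Bm : Matrix (Fin d) (Fin d) ℝ := Matrix.of fun x y => L (i, x) (i, y) with hBm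
  set B' : Matrix (Fin d) ({k : Fin n // k ≠ i ∧ k ≠ j} × Fin d) ℝ :=
    Matrix.of fun x q => L (i, x) (restEmb i j q) with hB'
  set A := L.submatrix (restEmb i j) (restEmb i j) with hA
  have hrest_inj : Function.Injective (restEmb i j (ι := Fin d)) := by
    rintro ⟨k, t⟩ ⟨k', t'⟩ h
    simp only [restEmb, Prod.mk.injEq] at h
    exact Prod.ext (Subtype.ext h.1) h.2
  have hApd : A.PosDef :=
    connLap_submatrix_posDef hW hσ hconn _ hrest_inj j (fun a => a.1.2.2)
  set f : Fin d ⊕ ({k : Fin n // k ≠ i ∧ k ≠ j} × Fin d) → Fin n × Fin d :=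
    Sum.elim (fun t => (i, t)) (restEmb i j) with hf
  have hf_inj : Function.Injective f := by
    rintro (t | ⟨k, t⟩) (t' | ⟨k', t'⟩) h <;>
      simp only [hf, Sum.elim_inl, Sum.elim_inr, restEmb, Prod.mk.injEq] at h
    · rw [h.2]
    · exact absurd h.1.symm k'.2.1
    · exact absurd h.1 k.2.1
    · exact congrArg Sum.inr (Prod.ext (Subtype.ext h.1) h.2)
  have hfj : ∀ a, (f a).1 ≠ j := by
    rintro (t | ⟨k, t⟩)
    · exact hij
    · exact k.2.2
  have hfrom : Matrix.fromBlocks Bm B' B'ᴴ A = L.submatrix f f := by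
    ext a b
    rcases a with t | q <;> rcases b with t' | q' <;>
      simp only [Matrix.fromBlocks_apply₁₁, Matrix.fromBlocks_apply₁₂,
        Matrix.fromBlocks_apply₂₁, Matrix.fromBlocks_apply₂₂, Matrix.submatrix_apply,
        hf, Sum.elim_inl, Sum.elim_inr, hBm, hB', hA, Matrix.of_apply,
        Matrix.conjTranspose_apply, star_trivial]
    exact connLap_symm_apply hW hσ _ _
  have hMpd : (Matrix.fromBlocks Bm B' B'ᴴ A).PosDef := by
    rw [hfrom]
    exact connLap_submatrix_posDef hW hσ hconn f hf_inj j hfj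
  have hS := schur_posDef Bm B' hApd hMpd
  have hblock : blockOf (conduct W σ i j) 0 0 = Bm - B' * A⁻¹ * B'ᴴ := by
    ext x y
    have hpair : ∀ t : Fin d, pairEmb i j ((0 : Fin 2), t) = (i, t) := by
      intro t; simp [pairEmb]
    simp only [blockOf, conduct, Matrix.of_apply, Matrix.sub_apply,
      Matrix.submatrix_apply, Matrix.mul_apply, hpair, ← hL, ← hA]
    congr 1
    refine Finset.sum_congr rfl fun q' _ => ?_
    have h2 : B' y q' = L (restEmb i j q') (i, y) :=
      (connLap_symm_apply hW hσ (i, y) (restEmb i j q')).symm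
    rw [Matrix.conjTranspose_apply, star_trivial, h2]
    rfl
  rw [hblock]
  exact hS
end
end
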